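/- arXiv:math/0603063 — 2 statements merged into one kernel-verified Lean document; each statement's English description precedes it below -/
import Mathlib

section
/- Let U be a Banach space with a normalized 1-unconditional basis (u_i), and let X be a reflexive Banach space which satisfies C-U-upper tree estimates for some C ≥ 1. Then for every ε > 0, the dual X^* satisfies (2C+ε)-U^(*)-lower tree estimates (with respect to the basis (u_i^*) of biorthogonal functionals). -/
open Filter Topology
open scoped ENNReal

noncomputable section

/-- A real Banach space is *reflexive* if the canonical inclusion into its double dual is
surjective. -/
def IsReflexiveSpace (X : Type*) [NormedAddCommGroup X] [NormedSpace ℝ X] : Prop :=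
  Function.Surjective (NormedSpace.inclusionInDoubleDual ℝ X)

section Sequences

variable {E F V U : Type*}
variable [NormedAddCommGroup E] [NormedSpace ℝ E] [NormedAddCommGroup F] [NormedSpace ℝ F]
variable [NormedAddCommGroup V] [NormedSpace ℝ V] [NormedAddCommGroup U] [NormedSpace ℝ U]

/-- `(f i)` `C`-dominates `(e i)`: `‖∑ aᵢ eᵢ‖ ≤ C ‖∑ aᵢ fᵢ‖` for all finitely supported
real scalar sequences `a`. -/
def Dominates (C : ℝ) (f : ℕ → F) (e : ℕ → E) : Prop :=
  ∀ a : ℕ →₀ ℝ, ‖a.sum fun i c => c • e i‖ ≤ C * ‖a.sum fun i c => c • f i‖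

/-- `(f i)_{i<k}` `C`-dominates `(e i)_{i<k}`. -/
def DominatesFin {k : ℕ} (C : ℝ) (f : Fin k → F) (e : Fin k → E) : Prop :=
  ∀ a : Fin k → ℝ, ‖∑ i, a i • e i‖ ≤ C * ‖∑ i, a i • f i‖

/-- The sequence `(v i)` is normalized. -/
def SeqNormalized (v : ℕ → V) : Prop := ∀ i, ‖v i‖ = 1

/-- The sequence `(v i)` is 1-unconditional. -/
def SeqUncond (v : ℕ → V) : Prop :=
  ∀ (s : Finset ℕ) (a ε : ℕ → ℝ), (∀ i, |ε i| ≤ 1) →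
    ‖∑ i ∈ s, (ε i * a i) • v i‖ ≤ ‖∑ i ∈ s, a i • v i‖

/-- The sequence `(v i)` is 1-spreading. -/
def SeqSpreading (v : ℕ → V) : Prop :=
  ∀ (s : Finset ℕ) (a : ℕ → ℝ) (n : ℕ → ℕ), StrictMono n →
    ‖∑ i ∈ s, a i • v (n i)‖ = ‖∑ i ∈ s, a i • v i‖

/-- The closed linear span of `(v i)` is the whole space. -/
def SeqTotal (v : ℕ → V) : Prop :=
  (Submodule.span ℝ (Set.range v)).topologicalClosure = ⊤

/-- `(v i)` is a normalized 1-unconditional (Schauder) basis of `V`. -/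
def Is1UncondBasis (v : ℕ → V) : Prop :=
  SeqNormalized v ∧ SeqUncond v ∧ SeqTotal v

/-- `(v i)` is a normalized 1-subsymmetric (i.e. 1-unconditional and 1-spreading) basis. -/
def Is1SubsymBasis (v : ℕ → V) : Prop :=
  Is1UncondBasis v ∧ SeqSpreading v

/-- `(b j)` is a block sequence of the basis `(v i)`: each `b j` is a nonzero finite linear
combination of the `v i`'s, and the supports are successive. -/
def IsBlockSeqOfBasis (v : ℕ → V) (b : ℕ → V) : Prop :=
  ∃ c : ℕ → (ℕ →₀ ℝ),
    (∀ j, b j = (c j).sum fun i r => r • v i) ∧ (∀ j, b j ≠ 0) ∧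
    ∀ j, ∀ i ∈ (c j).support, ∀ i' ∈ (c (j + 1)).support, i < i'

/-- The strong right shift property (SRS) of the basis `(v i)`. -/
def HasSRS (v : ℕ → V) : Prop :=
  ∃ c > (0 : ℝ), ∀ (n : ℕ) (a : ℕ →₀ ℝ),
    c * ‖a.sum fun i r => r • v i‖ ≤ ‖a.sum fun i r => r • v (i + n)‖

/-- The weak left shift property (WLS) of the basis `(v i)`. -/
def HasWLS (v : ℕ → V) : Prop :=
  ∃ d > (0 : ℝ), ∀ m : ℕ, ∃ L : ℕ, m ≤ L ∧ ∀ k ≤ m, ∀ a : ℕ →₀ ℝ, (∀ i ≤ L, a i = 0) →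
    ∀ b : ℕ →₀ ℝ, (∀ j, b j = a (j + k)) →
      d * ‖a.sum fun i r => r • v i‖ ≤ ‖b.sum fun i r => r • v i‖

end Sequences

section Trees

variable {X V U : Type*} [NormedAddCommGroup X] [NormedSpace ℝ X]
variable [NormedAddCommGroup V] [NormedSpace ℝ V] [NormedAddCommGroup U] [NormedSpace ℝ U]

/-- The branch of the tree `(x_α)` (indexed by finite strictly increasing lists of naturals)
along the strictly increasing sequence `n`. -/
def TreeBranch (x : List ℕ → X) (n : ℕ → ℕ) : ℕ → X := fun i => x ((List.range (i + 1)).map n)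

/-- The branch of a tree of length `k` along the strictly increasing sequence `n`. -/
def TreeBranchFin (k : ℕ) (x : List ℕ → X) (n : ℕ → ℕ) : Fin k → X :=
  fun i => x ((List.range ((i : ℕ) + 1)).map n)

/-- `x` is a normalized weakly null tree (of infinite length): every member indexed by a
strictly increasing list has norm one, and every node is weakly null. -/
def IsNWNTree (x : List ℕ → X) : Prop :=
  (∀ l : List ℕ, l.Pairwise (· < ·) → ‖x l‖ = 1) ∧
  ∀ l : List ℕ, l.Pairwise (· < ·) → ∀ f : StrongDual ℝ X,
    Tendsto (fun m => f (x (l ++ [m]))) atTop (nhds 0)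

/-- `x` is a normalized weakly null tree of length `k`. -/
def IsNWNTreeLen (k : ℕ) (x : List ℕ → X) : Prop :=
  (∀ l : List ℕ, l.Pairwise (· < ·) → l.length ≤ k → ‖x l‖ = 1) ∧
  ∀ l : List ℕ, l.Pairwise (· < ·) → l.length < k → ∀ f : StrongDual ℝ X,
    Tendsto (fun m => f (x (l ++ [m]))) atTop (nhds 0)

/-- `X` satisfies `C`-`V`-lower tree estimates w.r.t. the basis `(v i)`. -/
def LowerTreeEst (X : Type*) [NormedAddCommGroup X] [NormedSpace ℝ X]
    {V : Type*} [NormedAddCommGroup V] [NormedSpace ℝ V] (C : ℝ) (v : ℕ → V) : Prop :=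
  ∀ x : List ℕ → X, IsNWNTree x → ∃ n : ℕ → ℕ, StrictMono n ∧ Dominates C (TreeBranch x n) v

/-- `X` satisfies `C`-`U`-upper tree estimates w.r.t. the basis `(u i)`. -/
def UpperTreeEst (X : Type*) [NormedAddCommGroup X] [NormedSpace ℝ X]
    {U : Type*} [NormedAddCommGroup U] [NormedSpace ℝ U] (C : ℝ) (u : ℕ → U) : Prop :=
  ∀ x : List ℕ → X, IsNWNTree x → ∃ n : ℕ → ℕ, StrictMono n ∧ Dominates C u (TreeBranch x n)

/-- `X` satisfies asymptotic `C`-`V`-lower tree estimates. -/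
def AsympLowerTreeEst (X : Type*) [NormedAddCommGroup X] [NormedSpace ℝ X]
    {V : Type*} [NormedAddCommGroup V] [NormedSpace ℝ V] (C : ℝ) (v : ℕ → V) : Prop :=
  ∀ (k : ℕ) (x : List ℕ → X), IsNWNTreeLen k x →
    ∃ n : ℕ → ℕ, StrictMono n ∧ DominatesFin C (TreeBranchFin k x n) fun i : Fin k => v i

/-- `X` satisfies asymptotic `C`-`U`-upper tree estimates. -/
def AsympUpperTreeEst (X : Type*) [NormedAddCommGroup X] [NormedSpace ℝ X]
    {U : Type*} [NormedAddCommGroup U] [NormedSpace ℝ U] (C : ℝ) (u : ℕ → U) : Prop :=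
  ∀ (k : ℕ) (x : List ℕ → X), IsNWNTreeLen k x →
    ∃ n : ℕ → ℕ, StrictMono n ∧ DominatesFin C (fun i : Fin k => u i) (TreeBranchFin k x n)

end Trees

/-- A finite-dimensional decomposition (FDD) of `Z`: a sequence of finite-dimensional
subspaces together with the corresponding continuous coordinate projections, such that every
`z ∈ Z` is the norm-convergent sum of its coordinates. -/
structure FDD (Z : Type*) [NormedAddCommGroup Z] [NormedSpace ℝ Z] where
  E : ℕ → Submodule ℝ Z
  finDim : ∀ n, FiniteDimensional ℝ (E n)
  proj : ℕ → Z →L[ℝ] Z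
  mem_proj : ∀ n z, proj n z ∈ E n
  proj_self : ∀ n, ∀ z ∈ E n, proj n z = z
  proj_other : ∀ m n, m ≠ n → ∀ z ∈ E n, proj m z = 0
  tendsto_partialSum :
    ∀ z : Z, Tendsto (fun N => ∑ n ∈ Finset.range N, proj n z) atTop (nhds z)

section FDDdefs

variable {Z V U : Type*} [NormedAddCommGroup Z] [NormedSpace ℝ Z]
variable [NormedAddCommGroup V] [NormedSpace ℝ V] [NormedAddCommGroup U] [NormedSpace ℝ U]

/-- The support of `z` with respect to the FDD `F`. -/
def FDD.supp (F : FDD Z) (z : Z) : Set ℕ := {i | F.proj i z ≠ 0}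

/-- `(z j)` is a block sequence of the FDD `F`. -/
def FDD.IsBlockSeq (F : FDD Z) (z : ℕ → Z) : Prop :=
  (∀ j, z j ≠ 0 ∧ (F.supp (z j)).Finite) ∧
  ∀ j, ∀ i ∈ F.supp (z j), ∀ i' ∈ F.supp (z (j + 1)), i < i'

/-- The FDD `F` is shrinking: every bounded block sequence is weakly null. -/
def FDD.Shrinking (F : FDD Z) : Prop :=
  ∀ z : ℕ → Z, F.IsBlockSeq z → (∃ M : ℝ, ∀ j, ‖z j‖ ≤ M) →
    ∀ f : StrongDual ℝ Z, Tendsto (fun j => f (z j)) atTop (nhds 0)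

/-- The projection onto the coordinates in `[a,b)`. -/
def FDD.projIco (F : FDD Z) (a b : ℕ) : Z →L[ℝ] Z := ∑ i ∈ Finset.Ico a b, F.proj i

/-- The FDD `F` is bimonotone. -/
def FDD.Bimonotone (F : FDD Z) : Prop := ∀ (a b : ℕ) (z : Z), ‖F.projIco a b z‖ ≤ ‖z‖

/-- `G` is a blocking of the FDD `F`. -/
def FDD.IsBlocking (G F : FDD Z) : Prop :=
  ∃ k : ℕ → ℕ, k 0 = 0 ∧ StrictMono k ∧
    ∀ n, (G.proj n : Z →L[ℝ] Z) = ∑ i ∈ Finset.Ico (k n) (k (n + 1)), F.proj i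

/-- The FDD `F` satisfies `C`-`V`-lower estimates in `Z`. -/
def FDD.LowerEst (F : FDD Z) (C : ℝ) (v : ℕ → V) : Prop :=
  ∀ z : ℕ → Z, F.IsBlockSeq z → (∀ j, ‖z j‖ = 1) → Dominates C z v

/-- The FDD `F` satisfies `C`-`U`-upper estimates in `Z`. -/
def FDD.UpperEst (F : FDD Z) (C : ℝ) (u : ℕ → U) : Prop :=
  ∀ z : ℕ → Z, F.IsBlockSeq z → (∀ j, ‖z j‖ = 1) → Dominates C u z

/-- `(x i)_{i<n}` is a block sequence of `(E i)_{i≥n}` (of length `n`) of the FDD `F`. -/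
def FDD.IsAsympBlock (F : FDD Z) (n : ℕ) (x : Fin n → Z) : Prop :=
  (∀ i, x i ≠ 0 ∧ (F.supp (x i)).Finite ∧ ∀ j ∈ F.supp (x i), n ≤ j) ∧
  ∀ i i' : Fin n, i < i' → ∀ j ∈ F.supp (x i), ∀ j' ∈ F.supp (x i'), j < j'

/-- The FDD `F` satisfies asymptotic `C`-`V`-lower estimates in `Z`. -/
def FDD.AsympLowerEst (F : FDD Z) (C : ℝ) (v : ℕ → V) : Prop :=
  ∀ (n : ℕ) (x : Fin n → Z), F.IsAsympBlock n x →
    C⁻¹ * ‖∑ i, ‖x i‖ • v (i : ℕ)‖ ≤ ‖∑ i, x i‖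

/-- The FDD `F` satisfies asymptotic `C`-`U`-upper estimates in `Z`. -/
def FDD.AsympUpperEst (F : FDD Z) (C : ℝ) (u : ℕ → U) : Prop :=
  ∀ (n : ℕ) (x : Fin n → Z), F.IsAsympBlock n x →
    ‖∑ i, x i‖ ≤ C * ‖∑ i, ‖x i‖ • u (i : ℕ)‖

/-- The support of a functional `f` with respect to the dual FDD `(E_i^*)`. -/
def FDD.dualSupp (F : FDD Z) (f : StrongDual ℝ Z) : Set ℕ :=
  {i | f.comp (F.proj i) ≠ 0}

/-- `(g j)` is a block sequence of the dual FDD `(E_i^*)` in `Z^(*)`. -/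
def FDD.IsDualBlockSeq (F : FDD Z) (g : ℕ → StrongDual ℝ Z) : Prop :=
  (∀ j, g j ≠ 0 ∧ (F.dualSupp (g j)).Finite) ∧
  ∀ j, ∀ i ∈ F.dualSupp (g j), ∀ i' ∈ F.dualSupp (g (j + 1)), i < i'

/-- The space `c₀₀(⊕ E_i)` of finitely supported vectors of the FDD `F`. -/
def FDD.finVectors (F : FDD Z) : Submodule ℝ Z where
  carrier := {z | (F.supp z).Finite}
  zero_mem' := by
    refine Set.Finite.subset Set.finite_empty ?_
    intro i hi
    simp only [FDD.supp, Set.mem_setOf_eq, map_zero, ne_eq, not_true_eq_false] at hi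
  add_mem' := by
    intro a b ha hb
    refine Set.Finite.subset (Set.Finite.union ha hb) ?_
    intro i hi
    simp only [FDD.supp, Set.mem_setOf_eq, Set.mem_union] at hi ⊢
    by_contra hcon
    push_neg at hcon
    rw [map_add, hcon.1, hcon.2, add_zero] at hi
    exact hi rfl
  smul_mem' := by
    intro c a ha
    refine Set.Finite.subset ha ?_
    intro i hi
    simp only [FDD.supp, Set.mem_setOf_eq] at hi ⊢
    intro h0
    rw [map_smul, h0, smul_zero] at hi
    exact hi rfl

/-- The quantity `‖∑_{j<k} ‖P_{[n_j, n_{j+1})} z‖ v_j‖` appearing in the definition of the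
norm of `Z_V(E)`. -/
def zvBlockSum (F : FDD Z) (v : ℕ → V) (z : Z) (k : ℕ) (n : ℕ → ℕ) : ℝ :=
  ‖∑ j ∈ Finset.range k, ‖F.projIco (n j) (n (j + 1)) z‖ • v j‖

/-- Admissibility of the data `(k, n)` in the definition of the norm of `Z_V(E)`. -/
def IsZVAdmissible (k : ℕ) (n : ℕ → ℕ) : Prop := 1 ≤ k ∧ n 0 = 0 ∧ StrictMono n

/-- The norm of the space `Z_V(E)`. -/
def zvNorm (F : FDD Z) (v : ℕ → V) (z : Z) : ℝ :=
  sSup {r | ∃ k n, IsZVAdmissible k n ∧ r = zvBlockSum F v z k n}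

end FDDdefs

/-- A bundled Banach space. -/
structure BanachPack where
  carrier : Type
  [grp : NormedAddCommGroup carrier]
  [nsp : NormedSpace ℝ carrier]
  [cpl : CompleteSpace carrier]

attribute [instance] BanachPack.grp BanachPack.nsp BanachPack.cpl

/-- A bundled Banach space with an FDD. -/
structure BanachFDDPack where
  carrier : Type
  [grp : NormedAddCommGroup carrier]
  [nsp : NormedSpace ℝ carrier]
  [cpl : CompleteSpace carrier]
  fdd : FDD carrier

attribute [instance] BanachFDDPack.grp BanachFDDPack.nsp BanachFDDPack.cpl

section Tsirelson

variable {V : Type*} [NormedAddCommGroup V] [NormedSpace ℝ V]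

/-- The auxiliary norms `‖·‖_{ℓ, T(V,γ)}` on `c₀₀ = ℕ →₀ ℝ` used in the definition of the
Tsirelson space `T(V,γ)` associated to `V` and `γ`. -/
def tsNormAux (v : ℕ → V) (γ : ℝ) : ℕ → (ℕ →₀ ℝ) → ℝ
  | 0 => fun x => ⨆ i, |x i|
  | ℓ + 1 => fun x =>
      max (tsNormAux v γ ℓ x)
        (sSup {r | ∃ (n : ℕ) (A : ℕ → Finset ℕ), 1 ≤ n ∧
          (∀ i < n, ∀ a ∈ A i, n ≤ a) ∧
          (∀ i j, i < j → j < n → ∀ a ∈ A i, ∀ b ∈ A j, a < b) ∧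
          r = γ * ‖∑ i ∈ Finset.range n, tsNormAux v γ ℓ (x.filter (· ∈ A i)) • v i‖})

/-- The norm of the Tsirelson space `T(V,γ)` on `c₀₀ = ℕ →₀ ℝ`. -/
def tsNorm (v : ℕ → V) (γ : ℝ) (x : ℕ →₀ ℝ) : ℝ := ⨆ ℓ, tsNormAux v γ ℓ x

end Tsirelson

/-- The dual norm, on `c₀₀ = ℕ →₀ ℝ`, of a norm `N` on `c₀₀`. -/
def dualNormCoo (N : (ℕ →₀ ℝ) → ℝ) (b : ℕ →₀ ℝ) : ℝ :=
  sSup {r | ∃ x : ℕ →₀ ℝ, N x ≤ 1 ∧ r = x.sum fun i c => c * b i}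

/-- The `ℓ_p` norm of a finite real sequence (`p = ∞` gives the max norm). -/
def lpSum (p : ℝ≥0∞) {k : ℕ} (a : Fin k → ℝ) : ℝ :=
  if p = ∞ then ⨆ i, |a i| else (∑ i, |a i| ^ p.toReal) ^ (1 / p.toReal)


section LpEstimates

variable {X Z : Type*} [NormedAddCommGroup X] [NormedSpace ℝ X]
variable [NormedAddCommGroup Z] [NormedSpace ℝ Z]

/-- `X` satisfies asymptotic `C`-`ℓ_p`-lower tree estimates. -/
def AsympLpLowerTreeEst (X : Type*) [NormedAddCommGroup X] [NormedSpace ℝ X]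
    (C : ℝ) (p : ℝ≥0∞) : Prop :=
  ∀ (k : ℕ) (x : List ℕ → X), IsNWNTreeLen k x →
    ∃ n : ℕ → ℕ, StrictMono n ∧ ∀ a : Fin k → ℝ,
      C⁻¹ * lpSum p a ≤ ‖∑ i, a i • TreeBranchFin k x n i‖

/-- `X` satisfies asymptotic `C`-`ℓ_q`-upper tree estimates. -/
def AsympLpUpperTreeEst (X : Type*) [NormedAddCommGroup X] [NormedSpace ℝ X]
    (C : ℝ) (q : ℝ≥0∞) : Prop :=
  ∀ (k : ℕ) (x : List ℕ → X), IsNWNTreeLen k x →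
    ∃ n : ℕ → ℕ, StrictMono n ∧ ∀ a : Fin k → ℝ,
      ‖∑ i, a i • TreeBranchFin k x n i‖ ≤ C * lpSum q a

/-- The FDD `F` satisfies asymptotic `C`-`ℓ_p`-lower estimates. -/
def FDD.AsympLpLowerEst (F : FDD Z) (C : ℝ) (p : ℝ≥0∞) : Prop :=
  ∀ (n : ℕ) (x : Fin n → Z), F.IsAsympBlock n x →
    C⁻¹ * lpSum p (fun i => ‖x i‖) ≤ ‖∑ i, x i‖

/-- The FDD `F` satisfies asymptotic `C`-`ℓ_q`-upper estimates. -/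
def FDD.AsympLpUpperEst (F : FDD Z) (C : ℝ) (q : ℝ≥0∞) : Prop :=
  ∀ (n : ℕ) (x : Fin n → Z), F.IsAsympBlock n x →
    ‖∑ i, x i‖ ≤ C * lpSum q (fun i => ‖x i‖)

end LpEstimates

end


section StatementThreeAux
open Filter Topology NormedSpace

section Aux
variable {E : Type*} [NormedAddCommGroup E] [NormedSpace ℝ E]

/-- Norming vectors exist. -/
lemma exists_norming (f : StrongDual ℝ E) {r : ℝ} (hr : r < ‖f‖) :
    ∃ x : E, ‖x‖ ≤ 1 ∧ r < f x := by
  obtain ⟨x, hx1, hx2⟩ := f.exists_lt_apply_of_lt_opNorm hr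
  rw [Real.norm_eq_abs] at hx2
  rcases le_or_gt 0 (f x) with h | h
  · exact ⟨x, hx1.le, by rwa [abs_of_nonneg h] at hx2⟩
  · refine ⟨-x, by simpa using hx1.le, ?_⟩
    rw [map_neg]
    rwa [abs_of_neg h] at hx2

/-- Separation of a point from a closed submodule. -/
lemma exists_dual_annihilator {Z : Submodule ℝ E} (hZ : IsClosed (Z : Set E)) {x : E}
    (hx : x ∉ Z) : ∃ f : StrongDual ℝ E, (∀ w ∈ Z, f w = 0) ∧ f x ≠ 0 := by
  obtain ⟨f, c, hfZ, hcx⟩ := geometric_hahn_banach_closed_point (Z.convex) hZ hx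
  have h0 : (0:ℝ) < c := by simpa using hfZ 0 Z.zero_mem
  refine ⟨f, fun w hw => ?_, (h0.trans hcx).ne'⟩
  by_contra hne
  rcases lt_or_gt_of_ne hne with h | h
  · have := hfZ ((c / f w) • w) (Z.smul_mem _ hw)
    rw [map_smul] at this
    have hfw : f w ≠ 0 := ne_of_lt h
    rw [smul_eq_mul, div_mul_cancel₀ _ hfw] at this
    exact lt_irrefl _ this
  · have := hfZ ((c / f w) • w) (Z.smul_mem _ hw)
    rw [map_smul] at this
    have hfw : f w ≠ 0 := ne_of_gt h
    rw [smul_eq_mul, div_mul_cancel₀ _ hfw] at this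
    exact lt_irrefl _ this

/-- The restriction map from the dual of `E` to the dual of a submodule. -/
noncomputable def restrictDual (Z : Submodule ℝ E) : StrongDual ℝ E →L[ℝ] StrongDual ℝ Z :=
  LinearMap.mkContinuous
    { toFun := fun (f : StrongDual ℝ E) => (f.comp Z.subtypeL : StrongDual ℝ Z)
      map_add' := fun f g => by ext w; simp
      map_smul' := fun c f => by ext w; simp }
    1
    (fun f => by
      simp only [LinearMap.coe_mk, AddHom.coe_mk, one_mul]
      refine ContinuousLinearMap.opNorm_le_bound _ (norm_nonneg f) (fun w => ?_)
      simpa using f.le_opNorm (w : E))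

@[simp] lemma restrictDual_apply (Z : Submodule ℝ E) (f : StrongDual ℝ E) (w : Z) :
    restrictDual Z f w = f w := rfl



/-- A closed subspace of a reflexive space is reflexive, in the form we need. -/
lemma reflexive_subspace (hE : IsReflexiveSpace E) (Z : Submodule ℝ E)
    (hZc : IsClosed (Z : Set E)) (φ : StrongDual ℝ (StrongDual ℝ Z)) :
    ∃ z : Z, ∀ h : StrongDual ℝ Z, h z = φ h := by
  obtain ⟨x, hx⟩ := hE (φ.comp (restrictDual Z))
  have hxapp : ∀ f : StrongDual ℝ E, f x = φ (restrictDual Z f) := by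
    intro f
    have := congrFun (congrArg DFunLike.coe hx) f
    rw [NormedSpace.dual_def] at this
    rw [this]
    rfl
  have hxZ : x ∈ Z := by
    by_contra hxZ
    obtain ⟨f, hf0, hfx⟩ := exists_dual_annihilator hZc hxZ
    have : restrictDual Z f = 0 := by
      ext w; simpa using hf0 w w.2
    have := hxapp f
    rw [this] at hfx  -- hfx : φ (restrictDual Z f) ≠ 0
    rw [‹restrictDual Z f = 0›] at hfx
    simp at hfx
  refine ⟨⟨x, hxZ⟩, fun h => ?_⟩
  obtain ⟨g, hg, -⟩ := exists_extension_norm_eq Z h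
  have hrg : restrictDual Z g = h := by ext w; simpa using hg w
  have := hxapp g
  rw [hrg] at this
  rw [← this]
  exact (hg ⟨x, hxZ⟩).symm

open TopologicalSpace in
/-- If a set with dense span is countable, the space is separable. -/
lemma separableSpace_of_dense_span {s : Set E} (hc : s.Countable)
    (hd : Dense (Submodule.span ℝ s : Set E)) : SeparableSpace E := by
  rw [← isSeparable_univ_iff]
  have h1 : IsSeparable (Submodule.span ℝ s : Set E) := hc.isSeparable.span
  have := h1.closure
  rwa [hd.closure_eq] at this

open TopologicalSpace in
/-- If the dual of a normed space is separable, so is the space. -/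
lemma separable_of_dual_separable [SeparableSpace (StrongDual ℝ E)] : SeparableSpace E := by
  obtain ⟨f, hf⟩ := TopologicalSpace.exists_dense_seq (StrongDual ℝ E)
  have hw : ∀ k, ∃ x : E, ‖x‖ ≤ 1 ∧ (f k ≠ 0 → ‖f k‖ / 2 < f k x) := by
    intro k
    rcases eq_or_ne (f k) 0 with h | h
    · exact ⟨0, by simp, fun h' => absurd h h'⟩
    · have hpos : (0:ℝ) < ‖f k‖ := norm_pos_iff.2 h
      obtain ⟨x, hx1, hx2⟩ := exists_norming (f k) (r := ‖f k‖ / 2) (by linarith)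
      exact ⟨x, hx1, fun _ => hx2⟩
  choose w hw1 hw2 using hw
  refine separableSpace_of_dense_span (Set.countable_range w) ?_
  by_contra hnd
  -- find a point outside the closure of the span
  set Z : Submodule ℝ E := (Submodule.span ℝ (Set.range w)).topologicalClosure with hZ
  have hZc : IsClosed (Z : Set E) := (Submodule.span ℝ (Set.range w)).isClosed_topologicalClosure
  have hZne : Z ≠ ⊤ := by
    intro h
    apply hnd
    have : (Z : Set E) = Set.univ := by rw [h]; rfl
    rw [hZ, Submodule.topologicalClosure_coe] at this
    rw [dense_iff_closure_eq]
    exact this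
  have hex : ¬ ∀ v, v ∈ Z := fun h => hZne (Submodule.eq_top_iff'.2 h)
  push_neg at hex
  obtain ⟨x, hx⟩ := hex
  obtain ⟨g, hg0, hgx⟩ := exists_dual_annihilator hZc hx
  have hgne : g ≠ 0 := by
    intro h; rw [h] at hgx; simp at hgx
  have hgnorm : (0:ℝ) < ‖g‖ := norm_pos_iff.2 hgne
  set g' : StrongDual ℝ E := ‖g‖⁻¹ • g with hg'
  have hg'norm : ‖g'‖ = 1 := by
    rw [hg', norm_smul, norm_inv, norm_norm, inv_mul_cancel₀ hgnorm.ne']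
  have hg'0 : ∀ v ∈ Z, g' v = 0 := by
    intro v hv
    rw [hg']
    simp [hg0 v hv]
  obtain ⟨k, hk⟩ := (Metric.denseRange_iff.1 hf) g' (1/4) (by norm_num)
  have hfk : (3:ℝ)/4 ≤ ‖f k‖ := by
    have h1 : ‖g' - f k‖ < 1/4 := by
      rw [← dist_eq_norm]
      exact hk
    have := norm_sub_norm_le g' (f k)
    rw [hg'norm] at this
    linarith
  have hfkne : f k ≠ 0 := by
    intro h; rw [h, norm_zero] at hfk; linarith
  have h38 : (3:ℝ)/8 < f k (w k) := lt_of_le_of_lt (by linarith) (hw2 k hfkne)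
  have hwkZ : (w k : E) ∈ Z := by
    apply (Submodule.span ℝ (Set.range w)).le_topologicalClosure
    exact Submodule.subset_span (Set.mem_range_self k)
  have h14 : |f k (w k)| ≤ 1/4 := by
    have : f k (w k) = (f k - g') (w k) := by
      simp [hg'0 _ hwkZ]
    rw [this]
    calc |(f k - g') (w k)| ≤ ‖f k - g'‖ * ‖w k‖ := (f k - g').le_opNorm _
    _ ≤ ‖f k - g'‖ * 1 := by
        have : (0:ℝ) ≤ ‖f k - g'‖ := norm_nonneg _
        exact mul_le_mul_of_nonneg_left (hw1 k) this
    _ ≤ 1/4 := by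
        rw [mul_one, ← dist_eq_norm, dist_comm]
        exact hk.le
  have := le_abs_self (f k (w k))
  linarith


open TopologicalSpace in
/-- Weak sequential compactness of the unit ball of a reflexive space. -/
theorem weak_seq_compact [CompleteSpace E] (hE : IsReflexiveSpace E)
    (x : ℕ → E) (hb : ∀ n, ‖x n‖ ≤ 1) :
    ∃ z : E, ‖z‖ ≤ 1 ∧ ∃ φ : ℕ → ℕ, StrictMono φ ∧
      ∀ f : StrongDual ℝ E, Tendsto (fun j => f (x (φ j))) atTop (𝓝 (f z)) := by
  classical
  set Z : Submodule ℝ E := (Submodule.span ℝ (Set.range x)).topologicalClosure with hZdef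
  have hZc : IsClosed (Z : Set E) := (Submodule.span ℝ (Set.range x)).isClosed_topologicalClosure
  haveI : CompleteSpace Z := hZc.completeSpace_coe
  have hmem : ∀ n, x n ∈ Z := fun n =>
    (Submodule.span ℝ (Set.range x)).le_topologicalClosure
      (Submodule.subset_span (Set.mem_range_self n))
  set ξ : ℕ → Z := fun n => ⟨x n, hmem n⟩ with hξdef
  have hξb : ∀ n, ‖ξ n‖ ≤ 1 := fun n => by
    show ‖(ξ n : E)‖ ≤ 1
    exact hb n
  -- Z is separable
  haveI hZsep : SeparableSpace Z := by
    have h1 : IsSeparable (Z : Set E) := by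
      rw [hZdef, Submodule.topologicalClosure_coe]
      exact ((Set.countable_range x).isSeparable.span).closure
    exact h1.separableSpace
  -- Z** is separable
  have hsurj : Function.Surjective (inclusionInDoubleDual ℝ Z) := by
    intro φ
    obtain ⟨z, hz⟩ := reflexive_subspace hE Z hZc φ
    refine ⟨z, ?_⟩
    ext h
    rw [dual_def]
    exact hz h
  haveI : SeparableSpace (StrongDual ℝ (StrongDual ℝ Z)) :=
    hsurj.denseRange.separableSpace (inclusionInDoubleDual ℝ Z).continuous
  haveI : SeparableSpace (StrongDual ℝ Z) := by
    have := separable_of_dual_separable (E := StrongDual ℝ Z); exact this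
  obtain ⟨h, hdense⟩ := TopologicalSpace.exists_dense_seq (StrongDual ℝ Z)
  -- the diagonal subsequence via compactness of a product of intervals
  set F : ℕ → (ℕ → ℝ) := fun j k => h k (ξ j) with hFdef
  have hFK : ∀ j, F j ∈ Set.univ.pi (fun k => Set.Icc (-‖h k‖) ‖h k‖) := by
    intro j
    rw [Set.mem_univ_pi]
    intro k
    rw [Set.mem_Icc, ← abs_le]
    calc |h k (ξ j)| ≤ ‖h k‖ * ‖ξ j‖ := (h k).le_opNorm _
    _ ≤ ‖h k‖ * 1 := mul_le_mul_of_nonneg_left (hξb _) (ContinuousLinearMap.opNorm_nonneg _)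
    _ = ‖h k‖ := mul_one _
  have hK : IsCompact (Set.univ.pi (fun k => Set.Icc (-‖h k‖) ‖h k‖)) :=
    isCompact_univ_pi (fun k => isCompact_Icc)
  obtain ⟨L, -, φ, hφmono, hφtend⟩ := hK.isSeqCompact hFK
  have hcoord : ∀ k, Tendsto (fun j => h k (ξ (φ j))) atTop (𝓝 (L k)) := by
    intro k
    exact (tendsto_pi_nhds.1 hφtend) k
  -- every functional converges along the subsequence
  have hcau : ∀ g : StrongDual ℝ Z, CauchySeq (fun j => g (ξ (φ j))) := by
    intro g
    rw [Metric.cauchySeq_iff]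
    intro ε hε
    obtain ⟨k, hk⟩ := (Metric.denseRange_iff.1 hdense) g (ε/3) (by linarith)
    have hck := (hcoord k).cauchySeq
    rw [Metric.cauchySeq_iff] at hck
    obtain ⟨N, hN⟩ := hck (ε/3) (by linarith)
    refine ⟨N, fun m hm n hn => ?_⟩
    have hdiff : ∀ j, dist (g (ξ (φ j))) (h k (ξ (φ j))) ≤ ε/3 := by
      intro j
      rw [dist_eq_norm]
      have h1 : ‖(g - h k) (ξ (φ j))‖ ≤ ‖g - h k‖ * ‖ξ (φ j)‖ := (g - h k).le_opNorm _
      have h2 : ‖ξ (φ j)‖ ≤ 1 := hξb _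
      have h3 : ‖g - h k‖ ≤ ε/3 := (dist_eq_norm g (h k)).symm.le.trans hk.le
      have h4 : ‖g (ξ (φ j)) - h k (ξ (φ j))‖ = ‖(g - h k) (ξ (φ j))‖ := by simp
      rw [h4]
      nlinarith [norm_nonneg (g - h k), norm_nonneg (ξ (φ j))]
    have h5 := hN m hm n hn
    have h6 := hdiff m
    have h7 := hdiff n
    calc dist (g (ξ (φ m))) (g (ξ (φ n)))
        ≤ dist (g (ξ (φ m))) (h k (ξ (φ m))) + dist (h k (ξ (φ m))) (h k (ξ (φ n)))
          + dist (h k (ξ (φ n))) (g (ξ (φ n))) := dist_triangle4 _ _ _ _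
    _ < ε := by
        rw [dist_comm (g (ξ (φ n)))] at h7
        linarith
  have hlim : ∀ g : StrongDual ℝ Z, ∃ rr : ℝ, Tendsto (fun j => g (ξ (φ j))) atTop (𝓝 rr) :=
    fun g => cauchySeq_tendsto_of_complete (hcau g)
  choose r hr using hlim
  have hradd : ∀ g g', r (g + g') = r g + r g' := by
    intro g g'
    refine tendsto_nhds_unique (hr (g + g')) ?_
    have := (hr g).add (hr g')
    simpa using this
  have hrsmul : ∀ (c : ℝ) g, r (c • g) = c * r g := by
    intro c g
    refine tendsto_nhds_unique (hr (c • g)) ?_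
    have := (hr g).const_mul c
    simpa using this
  have hrbound : ∀ g, |r g| ≤ ‖g‖ := by
    intro g
    refine le_of_tendsto (hr g).abs (Eventually.of_forall fun j => ?_)
    calc |g (ξ (φ j))| ≤ ‖g‖ * ‖ξ (φ j)‖ := g.le_opNorm _
    _ ≤ ‖g‖ * 1 := mul_le_mul_of_nonneg_left (hξb _) (ContinuousLinearMap.opNorm_nonneg _)
    _ = ‖g‖ := mul_one _
  set φfun : StrongDual ℝ Z →L[ℝ] ℝ := LinearMap.mkContinuous
    { toFun := r, map_add' := hradd, map_smul' := fun c g => hrsmul c g } 1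
    (fun g => by
      rw [Real.norm_eq_abs, one_mul]
      exact hrbound g) with hφfun
  have hφfunapp : ∀ g, φfun g = r g := fun g => rfl
  obtain ⟨z₀, hz₀⟩ := reflexive_subspace hE Z hZc φfun
  have hfin : ∀ f : StrongDual ℝ E, Tendsto (fun j => f (x (φ j))) atTop (𝓝 (f (z₀ : E))) := by
    intro f
    have h1 : ∀ j, (restrictDual Z f) (ξ j) = f (x j) := fun j => rfl
    have h2 := hr (restrictDual Z f)
    have h3 : r (restrictDual Z f) = f (z₀ : E) := by
      rw [← hφfunapp, ← hz₀ (restrictDual Z f)]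
      rfl
    rw [h3] at h2
    simpa only [h1] using h2
  refine ⟨(z₀ : E), ?_, φ, hφmono, hfin⟩
  rcases eq_or_ne ((z₀ : E)) 0 with h0 | h0
  · rw [h0, norm_zero]; norm_num
  · obtain ⟨f, hf1, hf2⟩ := exists_dual_vector ℝ (z₀ : E) (norm_ne_zero_iff.2 h0)
    have h3 := hfin f
    have h4 : ‖(z₀ : E)‖ = f (z₀ : E) := by
      rw [hf2]
      simp
    rw [h4]
    refine le_of_tendsto h3 (Eventually.of_forall fun j => ?_)
    calc f (x (φ j)) ≤ |f (x (φ j))| := le_abs_self _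
    _ ≤ ‖f‖ * ‖x (φ j)‖ := f.le_opNorm _
    _ ≤ 1 * 1 := by
        rw [hf1]
        exact mul_le_mul_of_nonneg_left (hb _) (by norm_num)
    _ = 1 := one_mul _


end Aux

section ULem
variable {U : Type*} [NormedAddCommGroup U] [NormedSpace ℝ U]
variable {u : ℕ → U} {uStar : ℕ → StrongDual ℝ U}

lemma uncond_scale (hu : SeqUncond u) (s : Finset ℕ) (c t : ℕ → ℝ) {T : ℝ} (hT : 0 < T)
    (ht : ∀ i, |t i| ≤ T) :
    ‖∑ i ∈ s, (t i * c i) • u i‖ ≤ T * ‖∑ i ∈ s, c i • u i‖ := by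
  have h1 := hu s c (fun i => t i / T) (fun i => by
    rw [abs_div, abs_of_pos hT]
    exact div_le_one_of_le₀ (ht i) hT.le)
  have h2 : ∑ i ∈ s, (t i * c i) • u i = T • ∑ i ∈ s, ((t i / T) * c i) • u i := by
    rw [Finset.smul_sum]
    refine Finset.sum_congr rfl fun i _ => ?_
    rw [smul_smul]
    congr 1
    field_simp
  rw [h2, norm_smul, Real.norm_eq_abs, abs_of_pos hT]
  exact mul_le_mul_of_nonneg_left h1 hT.le

lemma uncond_proj (huu : SeqUncond u) (hut : SeqTotal u)
    (hbi : ∀ i j, uStar i (u j) = if i = j then (1:ℝ) else 0)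
    (s : Finset ℕ) (v : U) : ‖∑ i ∈ s, (uStar i v) • u i‖ ≤ ‖v‖ := by
  classical
  set T : U →L[ℝ] U := ∑ i ∈ s, (uStar i).smulRight (u i) with hT
  have hTapp : ∀ w, T w = ∑ i ∈ s, (uStar i w) • u i := by
    intro w
    rw [hT]
    simp [ContinuousLinearMap.sum_apply]
  have key : ∀ w, ‖T w‖ ≤ ‖w‖ := by
    have hclosed : IsClosed {w : U | ‖T w‖ ≤ ‖w‖} :=
      isClosed_le (T.continuous.norm) continuous_norm
    have hdense : closure (Submodule.span ℝ (Set.range u) : Set U) = Set.univ := by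
      rw [← Submodule.topologicalClosure_coe, hut]
      rfl
    have hsub : (Submodule.span ℝ (Set.range u) : Set U) ⊆ {w | ‖T w‖ ≤ ‖w‖} := by
      rintro w hw
      obtain ⟨μ, hμ⟩ := Finsupp.mem_span_range_iff_exists_finsupp.1 hw
      have hco : ∀ j, uStar j w = μ j := by
        intro j
        rw [← hμ, Finsupp.sum, map_sum]
        have h3 : ∀ i ∈ μ.support, uStar j (μ i • u i) = if i = j then μ i else 0 := by
          intro i _
          rw [map_smul, hbi j i]
          by_cases h : i = j
          · simp [h]
          · simp [h, Ne.symm h]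
        rw [Finset.sum_congr rfl h3, Finset.sum_ite_eq' μ.support j]
        by_cases h : j ∈ μ.support
        · simp [h]
        · simp [h, Finsupp.notMem_support_iff.1 h]
      simp only [Set.mem_setOf_eq]
      rw [hTapp]
      have h1 : ∑ i ∈ s, (uStar i w) • u i = ∑ i ∈ s, (μ i) • u i :=
        Finset.sum_congr rfl fun i _ => by rw [hco i]
      rw [h1]
      set S := s ∪ μ.support with hS
      have hsS : s ⊆ S := Finset.subset_union_left
      have h2 : ∑ i ∈ s, (μ i) • u i
          = ∑ i ∈ S, ((if i ∈ s then (1:ℝ) else 0) * μ i) • u i := by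
        have step1 : ∑ i ∈ s, (μ i) • u i
            = ∑ i ∈ s, ((if i ∈ s then (1:ℝ) else 0) * μ i) • u i :=
          Finset.sum_congr rfl (fun i hi => by rw [if_pos hi, one_mul])
        rw [step1]
        refine Finset.sum_subset hsS (fun i _ his => ?_)
        rw [if_neg his, zero_mul, zero_smul]
      have h4 : w = ∑ i ∈ S, (μ i) • u i := by
        rw [← hμ, Finsupp.sum]
        exact Finset.sum_subset Finset.subset_union_right (fun i _ hi => by
          rw [Finsupp.notMem_support_iff.1 hi, zero_smul])
      rw [h2, h4]
      exact huu S μ (fun i => if i ∈ s then (1:ℝ) else 0)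
        (fun i => by by_cases h : i ∈ s <;> simp [h])
    intro w
    have : w ∈ closure (Submodule.span ℝ (Set.range u) : Set U) := by
      rw [hdense]; trivial
    exact hclosed.closure_subset_iff.2 hsub this
  rw [← hTapp]
  exact key v

lemma uStar_norm_le (huu : SeqUncond u) (hut : SeqTotal u) (hnorm : ∀ i, ‖u i‖ = 1)
    (hbi : ∀ i j, uStar i (u j) = if i = j then (1:ℝ) else 0) (j : ℕ) (v : U) :
    |uStar j v| ≤ ‖v‖ := by
  have := uncond_proj huu hut hbi {j} v
  rw [Finset.sum_singleton, norm_smul, Real.norm_eq_abs, hnorm j, mul_one] at this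
  exact this

end ULem

-- ===== small helpers =====
lemma evabs {f : ℕ → ℝ} (h : Tendsto f atTop (𝓝 0)) {η : ℝ} (hη : 0 < η) :
    ∀ᶠ m in atTop, |f m| ≤ η := by
  have h1 : Tendsto (fun m => |f m|) atTop (𝓝 0) := by simpa using h.abs
  exact (h1.eventually_le_const hη)

lemma ev_list {α : Type*} (l : List α) (p : α → ℕ → Prop)
    (h : ∀ a ∈ l, ∀ᶠ t in atTop, p a t) : ∀ᶠ t in atTop, ∀ a ∈ l, p a t := by
  induction l with
  | nil => exact Eventually.of_forall (by simp)
  | cons b l ih =>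
    have h1 := h b (List.mem_cons_self)
    have h2 := ih (fun a ha => h a (List.mem_cons_of_mem b ha))
    filter_upwards [h1, h2] with t ht1 ht2
    intro a ha
    rcases List.mem_cons.1 ha with rfl | ha
    · exact ht1
    · exact ht2 a ha

lemma list_exists_bound (l : List ℕ) : ∃ N, ∀ a ∈ l, a < N := by
  induction l with
  | nil => exact ⟨0, by simp⟩
  | cons b l ih =>
    obtain ⟨N, hN⟩ := ih
    refine ⟨max (b + 1) N, fun a ha => ?_⟩
    rcases List.mem_cons.1 ha with rfl | ha
    · exact lt_of_lt_of_le (Nat.lt_succ_self a) (le_max_left _ _)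
    · exact lt_of_lt_of_le (hN a ha) (le_max_right _ _)

lemma sorted_concat_iff {l : List ℕ} {m : ℕ} :
    (l ++ [m]).Pairwise (· < ·) ↔ l.Pairwise (· < ·) ∧ ∀ a ∈ l, a < m := by
  constructor
  · intro h
    rw [List.pairwise_append] at h
    exact ⟨h.1, fun a ha => h.2.2 a ha m (List.mem_singleton_self m)⟩
  · intro ⟨h1, h2⟩
    rw [List.pairwise_append]
    exact ⟨h1, List.pairwise_singleton _ m, fun a ha b hb => by
      rw [List.mem_singleton.1 hb]; exact h2 a ha⟩

-- ===== the node structure =====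
structure PfNode {X : Type*} [NormedAddCommGroup X] [NormedSpace ℝ X]
    (g : List ℕ → StrongDual ℝ X) (τ : ℝ) : Type _ where
  ψ : List ℕ
  ys : List X
  σ : ℕ → ℕ
  z : X
  w : ℕ → X
  hψ : ψ.Pairwise (· < ·)
  hσ : StrictMono σ
  hsort : ∀ m, (ψ ++ [σ m]).Pairwise (· < ·)
  hnorm : ∀ m, 1 - 2*τ ≤ g (ψ ++ [σ m]) (w m - z)
  hlb : ∀ m, 1 - 2*τ ≤ ‖w m - z‖
  hub : ∀ m, ‖w m - z‖ ≤ 2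
  hsmall₁ : ∀ m, ∀ y ∈ ys, |g (ψ ++ [σ m]) y| ≤ τ * (4:ℝ)⁻¹ ^ (ψ.length + 1)
  hsmall₂ : ∀ m, ∀ i, i < ψ.length → |g (ψ.take (i+1)) (w m - z)| ≤ τ * (4:ℝ)⁻¹ ^ (ψ.length + 1)
  hweak : ∀ f : StrongDual ℝ X, Tendsto (fun m => f (w m - z)) atTop (𝓝 0)

section Build
variable {X : Type*} [NormedAddCommGroup X] [NormedSpace ℝ X] [CompleteSpace X]
variable {g : List ℕ → StrongDual ℝ X} {τ : ℝ}

lemma pfnode_exists (hX : IsReflexiveSpace X) (hg : IsNWNTree g) (hτ : 0 < τ) (ψ : List ℕ) (hψ : ψ.Pairwise (· < ·)) (ys : List X) :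
    ∃ nd : PfNode g τ, nd.ψ = ψ ∧ nd.ys = ys := by
  classical
  have hWex : ∀ m', ∃ xw : X, ‖xw‖ ≤ 1 ∧
      ((ψ ++ [m']).Pairwise (· < ·) → 1 - τ < g (ψ ++ [m']) xw) := by
    intro m'
    by_cases hs : (ψ ++ [m']).Pairwise (· < ·)
    · have h1 : ‖g (ψ ++ [m'])‖ = 1 := hg.1 _ hs
      obtain ⟨xw, hxw1, hxw2⟩ := exists_norming (g (ψ ++ [m'])) (r := 1 - τ)
        (by rw [h1]; linarith)
      exact ⟨xw, hxw1, fun _ => hxw2⟩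
    · exact ⟨0, by simp, fun h => absurd h hs⟩
  choose W hW1 hW2 using hWex
  obtain ⟨z, hznorm, ms, hms, hconv⟩ := weak_seq_compact hX W hW1
  set η := τ * (4:ℝ)⁻¹ ^ (ψ.length + 1) with hη
  have hηpos : 0 < η := by positivity
  have hmstop : Tendsto ms atTop atTop := hms.tendsto_atTop
  have evsort : ∀ᶠ t in atTop, ∀ a ∈ ψ, a < ms t := by
    obtain ⟨N, hN⟩ := list_exists_bound ψ
    filter_upwards [hmstop.eventually_ge_atTop N] with t ht a ha
    exact lt_of_lt_of_le (hN a ha) ht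
  have evy : ∀ᶠ t in atTop, ∀ y ∈ ys, |g (ψ ++ [ms t]) y| ≤ η := by
    refine ev_list ys _ (fun y _ => ?_)
    have hnode := hg.2 ψ hψ (inclusionInDoubleDual ℝ X y)
    have h2 : Tendsto (fun m => g (ψ ++ [m]) y) atTop (𝓝 0) := by
      simpa [NormedSpace.dual_def] using hnode
    exact evabs (h2.comp hmstop) hηpos
  have evz : ∀ᶠ t in atTop, |g (ψ ++ [ms t]) z| ≤ τ := by
    have hnode := hg.2 ψ hψ (inclusionInDoubleDual ℝ X z)
    have h2 : Tendsto (fun m => g (ψ ++ [m]) z) atTop (𝓝 0) := by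
      simpa [NormedSpace.dual_def] using hnode
    exact evabs (h2.comp hmstop) hτ
  have evpre : ∀ᶠ t in atTop, ∀ i ∈ List.range ψ.length,
      |g (ψ.take (i+1)) (W (ms t) - z)| ≤ η := by
    refine ev_list _ _ (fun i _ => ?_)
    have h1 := hconv (g (ψ.take (i+1)))
    have h2 : Tendsto (fun t => g (ψ.take (i+1)) (W (ms t) - z)) atTop (𝓝 0) := by
      have h3 := h1.sub_const (g (ψ.take (i+1)) z)
      simpa [map_sub] using h3
    exact evabs h2 hηpos
  obtain ⟨T, hT⟩ := eventually_atTop.1 ((evsort.and evy).and (evz.and evpre))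
  refine ⟨⟨ψ, ys, fun m => ms (m + T), z, fun m => W (ms (m + T)), hψ,
    fun a b hab => hms (by omega), ?_, ?_, ?_, ?_, ?_, ?_, ?_⟩, rfl, rfl⟩
  · -- hsort
    intro m
    have h1 := (hT (m + T) (by omega)).1.1
    exact sorted_concat_iff.2 ⟨hψ, h1⟩
  · -- hnorm
    intro m
    have hsrt : (ψ ++ [ms (m + T)]).Pairwise (· < ·) := by
      have h1 := (hT (m + T) (by omega)).1.1
      exact sorted_concat_iff.2 ⟨hψ, h1⟩
    have h2 := hW2 (ms (m + T)) hsrt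
    have h3 := (hT (m + T) (by omega)).2.1
    have h4 : |g (ψ ++ [ms (m + T)]) z| ≤ τ := h3
    rw [map_sub]
    have := abs_le.1 h4
    linarith [this.2]
  · -- hlb
    intro m
    have hsrt : (ψ ++ [ms (m + T)]).Pairwise (· < ·) := by
      have h1 := (hT (m + T) (by omega)).1.1
      exact sorted_concat_iff.2 ⟨hψ, h1⟩
    have hn1 : ‖g (ψ ++ [ms (m + T)])‖ = 1 := hg.1 _ hsrt
    have h2 := hW2 (ms (m + T)) hsrt
    have h3 : |g (ψ ++ [ms (m + T)]) z| ≤ τ := (hT (m + T) (by omega)).2.1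
    have h5 : g (ψ ++ [ms (m + T)]) (W (ms (m + T)) - z)
        ≤ ‖W (ms (m + T)) - z‖ := by
      calc g (ψ ++ [ms (m + T)]) (W (ms (m + T)) - z)
          ≤ |g (ψ ++ [ms (m + T)]) (W (ms (m + T)) - z)| := le_abs_self _
      _ ≤ ‖g (ψ ++ [ms (m + T)])‖ * ‖W (ms (m + T)) - z‖ :=
          (g (ψ ++ [ms (m + T)])).le_opNorm _
      _ = ‖W (ms (m + T)) - z‖ := by rw [hn1, one_mul]
    rw [map_sub] at h5
    have := abs_le.1 h3
    linarith [this.2]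
  · -- hub
    intro m
    calc ‖W (ms (m + T)) - z‖ ≤ ‖W (ms (m + T))‖ + ‖z‖ := norm_sub_le _ _
    _ ≤ 1 + 1 := add_le_add (hW1 _) hznorm
    _ = 2 := by norm_num
  · -- hsmall₁
    intro m y hy
    exact (hT (m + T) (by omega)).1.2 y hy
  · -- hsmall₂
    intro m i hi
    exact (hT (m + T) (by omega)).2.2 i (List.mem_range.2 hi)
  · -- hweak
    intro f
    have h1 := (hconv f).comp (tendsto_add_atTop_nat T)
    have h2 := h1.sub_const (f z)
    simpa [map_sub] using h2

noncomputable def stepNode (hX : IsReflexiveSpace X) (hg : IsNWNTree g) (hτ : 0 < τ) (m : ℕ) (nd : PfNode g τ) :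
    {nd' : PfNode g τ // nd'.ψ = nd.ψ ++ [nd.σ m] ∧ nd'.ys = nd.ys ++ [nd.w m - nd.z]} :=
  ⟨(pfnode_exists hX hg hτ _ (nd.hsort m) (nd.ys ++ [nd.w m - nd.z])).choose,
   (pfnode_exists hX hg hτ _ (nd.hsort m) (nd.ys ++ [nd.w m - nd.z])).choose_spec⟩

noncomputable def buildGo (hX : IsReflexiveSpace X) (hg : IsNWNTree g) (hτ : 0 < τ) : List ℕ → PfNode g τ
  | [] => (pfnode_exists hX hg hτ [] (List.Pairwise.nil) []).choose
  | m :: r => (stepNode hX hg hτ m (buildGo hX hg hτ r)).1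

noncomputable def build (hX : IsReflexiveSpace X) (hg : IsNWNTree g) (hτ : 0 < τ) (l : List ℕ) : PfNode g τ := buildGo hX hg hτ l.reverse

lemma build_nil_ψ (hX : IsReflexiveSpace X) (hg : IsNWNTree g) (hτ : 0 < τ) : (build hX hg hτ []).ψ = [] :=
  (pfnode_exists hX hg hτ [] (List.Pairwise.nil) []).choose_spec.1

lemma build_nil_ys (hX : IsReflexiveSpace X) (hg : IsNWNTree g) (hτ : 0 < τ) : (build hX hg hτ []).ys = [] :=
  (pfnode_exists hX hg hτ [] (List.Pairwise.nil) []).choose_spec.2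

lemma build_concat (hX : IsReflexiveSpace X) (hg : IsNWNTree g) (hτ : 0 < τ) (l : List ℕ) (m : ℕ) :
    build hX hg hτ (l ++ [m]) = (stepNode hX hg hτ m (build hX hg hτ l)).1 := by
  unfold build
  rw [List.reverse_append]
  rfl

lemma build_concat_ψ (hX : IsReflexiveSpace X) (hg : IsNWNTree g) (hτ : 0 < τ) (l : List ℕ) (m : ℕ) :
    (build hX hg hτ (l ++ [m])).ψ
      = (build hX hg hτ l).ψ ++ [(build hX hg hτ l).σ m] := by
  rw [build_concat]
  exact (stepNode hX hg hτ m (build hX hg hτ l)).2.1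

lemma build_concat_ys (hX : IsReflexiveSpace X) (hg : IsNWNTree g) (hτ : 0 < τ) (l : List ℕ) (m : ℕ) :
    (build hX hg hτ (l ++ [m])).ys
      = (build hX hg hτ l).ys ++ [(build hX hg hτ l).w m - (build hX hg hτ l).z] := by
  rw [build_concat]
  exact (stepNode hX hg hτ m (build hX hg hτ l)).2.2

/-- The unnormalized tree vector. -/
noncomputable def yval (hX : IsReflexiveSpace X) (hg : IsNWNTree g) (hτ : 0 < τ) (l : List ℕ) : X := ((build hX hg hτ l).ys).getLastD 0

lemma yval_concat (hX : IsReflexiveSpace X) (hg : IsNWNTree g) (hτ : 0 < τ) (l : List ℕ) (m : ℕ) :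
    yval hX hg hτ (l ++ [m]) = (build hX hg hτ l).w m - (build hX hg hτ l).z := by
  unfold yval
  rw [build_concat_ys]
  exact List.getLastD_concat

lemma yval_lb (hX : IsReflexiveSpace X) (hg : IsNWNTree g) (hτ : 0 < τ) (l : List ℕ) (m : ℕ) : 1 - 2*τ ≤ ‖yval hX hg hτ (l ++ [m])‖ := by
  rw [yval_concat]
  exact (build hX hg hτ l).hlb m

lemma yval_ub (hX : IsReflexiveSpace X) (hg : IsNWNTree g) (hτ : 0 < τ) (l : List ℕ) (m : ℕ) : ‖yval hX hg hτ (l ++ [m])‖ ≤ 2 := by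
  rw [yval_concat]
  exact (build hX hg hτ l).hub m

/-- The normalized weakly null tree fed to the upper-estimate hypothesis. -/
noncomputable def Ytree (hX : IsReflexiveSpace X) (hg : IsNWNTree g) (hτ : 0 < τ) (e : X) (l : List ℕ) : X :=
  if l = [] then e else ‖yval hX hg hτ l‖⁻¹ • yval hX hg hτ l

lemma Ytree_concat (hX : IsReflexiveSpace X) (hg : IsNWNTree g) (hτ : 0 < τ) (e : X) (l : List ℕ) (m : ℕ) :
    Ytree hX hg hτ e (l ++ [m])
      = ‖yval hX hg hτ (l ++ [m])‖⁻¹ • yval hX hg hτ (l ++ [m]) := by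
  unfold Ytree
  rw [if_neg (by simp)]

lemma Ytree_isNWN (hX : IsReflexiveSpace X) (hg : IsNWNTree g) (hτ : 0 < τ) (hτ' : τ ≤ 1/100) (e : X) (he : ‖e‖ = 1) : IsNWNTree (Ytree hX hg hτ e) := by
  have hτhalf : 1 - 2*τ > 0 := by linarith
  constructor
  · intro l hl
    rcases List.eq_nil_or_concat' l with rfl | ⟨l', m, rfl⟩
    · simpa [Ytree] using he
    · rw [Ytree_concat]
      have h1 : yval hX hg hτ (l' ++ [m]) ≠ 0 := by
        intro h0
        have := yval_lb hX hg hτ l' m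
        rw [h0, norm_zero] at this
        linarith
      exact norm_smul_inv_norm h1
  · intro l hl f
    have h1 : ∀ m, Ytree hX hg hτ e (l ++ [m])
        = ‖yval hX hg hτ (l ++ [m])‖⁻¹ • yval hX hg hτ (l ++ [m]) :=
      fun m => Ytree_concat hX hg hτ e l m
    refine squeeze_zero_norm (a := fun m => (1 - 2*τ)⁻¹ *
      ‖f ((build hX hg hτ l).w m - (build hX hg hτ l).z)‖) (fun m => ?_) ?_
    · rw [h1 m, map_smul, yval_concat]
      rw [norm_smul, norm_inv, norm_norm]
      have h2 : ‖(build hX hg hτ l).w m - (build hX hg hτ l).z‖⁻¹ ≤ (1 - 2*τ)⁻¹ := by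
        apply inv_anti₀ hτhalf
        exact (build hX hg hτ l).hlb m
      have h3 : (0:ℝ) ≤ ‖f ((build hX hg hτ l).w m - (build hX hg hτ l).z)‖ :=
        norm_nonneg _
      exact mul_le_mul_of_nonneg_right h2 h3
    · have h4 := ((build hX hg hτ l).hweak f).norm
      have h5 := h4.const_mul ((1 - 2*τ)⁻¹)
      simpa using h5

end Build


lemma geom_finset_le (s : Finset ℕ) : ∑ i ∈ s, ((2:ℝ)⁻¹)^i ≤ 2 := by
  have hr : ∀ B, ∑ i ∈ Finset.range B, ((2:ℝ)⁻¹)^i = 2 - 2 * (2⁻¹)^B := by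
    intro B
    induction B with
    | zero => simp
    | succ B ih => rw [Finset.sum_range_succ, ih]; ring
  have hsub : s ⊆ Finset.range (s.sup id + 1) := fun i hi =>
    Finset.mem_range.2 (Nat.lt_succ_of_le (Finset.le_sup (f := id) hi))
  calc ∑ i ∈ s, ((2:ℝ)⁻¹)^i ≤ ∑ i ∈ Finset.range (s.sup id + 1), ((2:ℝ)⁻¹)^i :=
      Finset.sum_le_sum_of_subset_of_nonneg hsub (fun i _ _ => by positivity)
  _ = 2 - 2 * (2⁻¹)^(s.sup id + 1) := hr _
  _ ≤ 2 := by
      have : (0:ℝ) ≤ (2⁻¹)^(s.sup id + 1) := by positivity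
      linarith

lemma pow4_le_pow2 {i j : ℕ} (h : i ≤ j) : ((4:ℝ)⁻¹)^(j+1) ≤ (2⁻¹)^i * (2⁻¹)^j := by
  have h1 : ((4:ℝ)⁻¹) = (2⁻¹) * (2⁻¹) := by norm_num
  rw [h1, mul_pow]
  apply mul_le_mul (pow_le_pow_of_le_one (by norm_num) (by norm_num) (by omega))
    (pow_le_pow_of_le_one (by norm_num) (by norm_num) (by omega)) (by positivity) (by positivity)

lemma final_arith {A P C ε τ : ℝ} (hA : 0 ≤ A) (hP : 0 ≤ P) (hC : 1 ≤ C) (hε : 0 < ε)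
    (hτpos : 0 < τ) (hτ100 : τ ≤ 1/100) (hτε : 8*(3*C+ε)*τ ≤ ε)
    (h1 : (1-2*τ)*A ≤ 2*C*P + 4*τ*A) : A ≤ (2*C+ε)*P := by
  have h4 : 6*τ*(2*C+ε) ≤ ε := by
    nlinarith [mul_nonneg hτpos.le (show (0:ℝ) ≤ 12*C + 2*ε by positivity)]
  have h5 : (0:ℝ) < 1 - 6*τ := by linarith
  have h6 : A ≤ 2*C/(1-6*τ) * P := by
    rw [div_mul_eq_mul_div, le_div_iff₀ h5]
    linarith
  have h7 : 2*C/(1-6*τ) ≤ 2*C+ε := by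
    rw [div_le_iff₀ h5]
    nlinarith
  calc A ≤ 2*C/(1-6*τ) * P := h6
  _ ≤ (2*C+ε) * P := mul_le_mul_of_nonneg_right h7 hP


end StatementThreeAux

/-- If a reflexive `X` satisfies `C`-`U`-upper tree estimates then, for every
`ε > 0`, `X^*` satisfies `(2C+ε)`-`U^(*)`-lower tree estimates. -/
theorem statement3 {X U : Type*}
    [NormedAddCommGroup X] [NormedSpace ℝ X] [CompleteSpace X]
    [NormedAddCommGroup U] [NormedSpace ℝ U] [CompleteSpace U]
    (hXrefl : IsReflexiveSpace X)
    (u : ℕ → U) (hu : Is1UncondBasis u)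
    (uStar : ℕ → StrongDual ℝ U)
    (hbi : ∀ i j, uStar i (u j) = if i = j then (1 : ℝ) else 0)
    (C : ℝ) (hC : 1 ≤ C) (hupper : UpperTreeEst X C u)
    (ε : ℝ) (hε : 0 < ε) :
    LowerTreeEst (StrongDual ℝ X) (2 * C + ε) uStar := by
  classical
  obtain ⟨hun, huu, hut⟩ := hu
  intro gt hgt
  -- choose τ
  have hden : (0:ℝ) < 8 * (3*C + ε) := by nlinarith
  set τ : ℝ := min (1/100) (ε / (8 * (3*C + ε))) with hτdef
  have hτpos : 0 < τ := lt_min (by norm_num) (by positivity)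
  have hτ100 : τ ≤ 1/100 := min_le_left _ _
  have hτε : 8 * (3*C + ε) * τ ≤ ε := by
    have h1 : τ ≤ ε / (8 * (3*C + ε)) := min_le_right _ _
    calc 8 * (3*C + ε) * τ ≤ 8 * (3*C + ε) * (ε / (8 * (3*C + ε))) :=
        mul_le_mul_of_nonneg_left h1 hden.le
    _ = ε := by field_simp
  have h2τ : (0:ℝ) < 1 - 2*τ := by linarith
  clear_value τ
  clear hτdef
  -- a junk unit vector in X
  obtain ⟨e, he⟩ : ∃ e : X, ‖e‖ = 1 := by
    have h1 : ‖gt []‖ = 1 := hgt.1 [] List.Pairwise.nil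
    obtain ⟨x0, hx1, hx2⟩ := exists_norming (gt []) (r := 1/2) (by rw [h1]; norm_num)
    have hx0 : x0 ≠ 0 := by
      intro h0
      rw [h0, map_zero] at hx2
      norm_num at hx2
    exact ⟨‖x0‖⁻¹ • x0, norm_smul_inv_norm hx0⟩
  -- feed the tree to the upper estimates
  obtain ⟨n, hnmono, hdom⟩ := hupper (Ytree hXrefl hgt hτpos e)
    (Ytree_isNWN hXrefl hgt hτpos hτ100 e he)
  -- branch data
  set L : ℕ → List ℕ := fun i => (List.range (i+1)).map n with hL
  have hLsucc : ∀ i, L (i+1) = L i ++ [n (i+1)] := by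
    intro i
    rw [hL]
    simp [List.range_succ]
  have hL0 : L 0 = [] ++ [n 0] := by
    rw [hL]
    simp [List.range_succ]
  set N : ℕ → PfNode gt τ := fun i => build hXrefl hgt hτpos (L i) with hN
  set yb : ℕ → X := fun i => yval hXrefl hgt hτpos (L i) with hyb
  set θ : ℕ → ℝ := fun i => ‖yb i‖ with hθ
  set n' : ℕ → ℕ := fun i => ((N i).ψ).getLastD 0 with hn'
  -- description of the ψ's along the branch
  have hψbr : ∀ i, (N i).ψ = (List.range (i+1)).map n' := by
    intro i
    induction i with
    | zero =>
      have h1 : (N 0).ψ = [(build hXrefl hgt hτpos []).σ (n 0)] := by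
        rw [hN]
        show (build hXrefl hgt hτpos (L 0)).ψ = _
        rw [hL0, build_concat_ψ, build_nil_ψ]
        simp
      have h2 : n' 0 = (build hXrefl hgt hτpos []).σ (n 0) := by
        show ((N 0).ψ).getLastD 0 = _
        rw [h1]
        rfl
      rw [h1]
      have h3 : (List.range 1).map n' = [n' 0] := by norm_num [List.range_succ]
      rw [h3, h2]
    | succ i ih =>
      have h1 : (N (i+1)).ψ = (N i).ψ ++ [(N i).σ (n (i+1))] := by
        rw [hN]
        show (build hXrefl hgt hτpos (L (i+1))).ψ = _
        rw [hLsucc, build_concat_ψ]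
      have h2 : n' (i+1) = (N i).σ (n (i+1)) := by
        show ((N (i+1)).ψ).getLastD 0 = _
        rw [h1]
        exact List.getLastD_concat
      rw [h1, ih]
      have h3 : (List.range (i+1+1)).map n' = (List.range (i+1)).map n' ++ [n' (i+1)] := by
        rw [List.range_succ]
        simp
      rw [h3, h2]
  have hψlen : ∀ i, (N i).ψ.length = i + 1 := by
    intro i
    rw [hψbr i]
    simp
  -- n' is strictly monotone
  have hlastmem : ∀ i, n' i ∈ (N i).ψ := by
    intro i
    have h1 : (N i).ψ = (List.range i).map n' ++ [n' i] := by
      rw [hψbr i, List.range_succ]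
      simp
    rw [h1]
    exact List.mem_append_right _ (List.mem_singleton_self _)
  have hmono' : StrictMono n' := by
    apply strictMono_nat_of_lt_succ
    intro i
    have h1 : (N (i+1)).ψ = (N i).ψ ++ [(N i).σ (n (i+1))] := by
      rw [hN]
      show (build hXrefl hgt hτpos (L (i+1))).ψ = _
      rw [hLsucc, build_concat_ψ]
    have h2 : n' (i+1) = (N i).σ (n (i+1)) := by
      show ((N (i+1)).ψ).getLastD 0 = _
      rw [h1]
      exact List.getLastD_concat
    have h3 := (sorted_concat_iff.1 ((N i).hsort (n (i+1)))).2
    rw [h2]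
    exact h3 _ (hlastmem i)
  -- the branch functionals
  set G : ℕ → StrongDual ℝ X := fun i => gt ((N i).ψ) with hG
  have hGbranch : ∀ i, TreeBranch gt n' i = G i := by
    intro i
    rw [hG]
    show gt ((List.range (i+1)).map n') = gt ((N i).ψ)
    rw [hψbr i]
  have hGnorm : ∀ i, ‖G i‖ = 1 := fun i => hgt.1 _ (N i).hψ
  -- concat decomposition of branch lists
  have hdec : ∀ i, ∃ l, L i = l ++ [n i] ∧ N i = build hXrefl hgt hτpos (l ++ [n i])
      ∧ (build hXrefl hgt hτpos l).ψ.length = i := by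
    intro i
    cases i with
    | zero =>
      refine ⟨[], hL0, ?_, by rw [build_nil_ψ]; rfl⟩
      show build hXrefl hgt hτpos (L 0) = _
      rw [hL0]
    | succ i =>
      refine ⟨L i, hLsucc i, ?_, hψlen i⟩
      show build hXrefl hgt hτpos (L (i+1)) = _
      rw [hLsucc]
  -- diagonal lower bound, θ bounds
  have hdiag : ∀ i, 1 - 2*τ ≤ G i (yb i) := by
    intro i
    obtain ⟨l, hl, hNl, -⟩ := hdec i
    have h1 : yb i = (build hXrefl hgt hτpos l).w (n i) - (build hXrefl hgt hτpos l).z := by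
      show yval hXrefl hgt hτpos (L i) = _
      rw [hl, yval_concat]
    have h2 : (N i).ψ = (build hXrefl hgt hτpos l).ψ ++ [(build hXrefl hgt hτpos l).σ (n i)] := by
      rw [hNl, build_concat_ψ]
    rw [h1]
    show 1 - 2*τ ≤ gt ((N i).ψ) _
    rw [h2]
    exact (build hXrefl hgt hτpos l).hnorm (n i)
  have hθlb : ∀ i, 1 - 2*τ ≤ θ i := by
    intro i
    obtain ⟨l, hl, -, -⟩ := hdec i
    show 1 - 2*τ ≤ ‖yval hXrefl hgt hτpos (L i)‖
    rw [hl]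
    exact yval_lb hXrefl hgt hτpos l (n i)
  have hθub : ∀ i, θ i ≤ 2 := by
    intro i
    obtain ⟨l, hl, -, -⟩ := hdec i
    show ‖yval hXrefl hgt hτpos (L i)‖ ≤ 2
    rw [hl]
    exact yval_ub hXrefl hgt hτpos l (n i)
  have hθpos : ∀ i, 0 < θ i := fun i => lt_of_lt_of_le h2τ (hθlb i)
  have hGpos : ∀ i, 0 < G i (yb i) := fun i => lt_of_lt_of_le h2τ (hdiag i)
  -- membership of the branch vectors in the ys lists
  have hysmem : ∀ i j, j ≤ i → yb j ∈ (N i).ys := by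
    intro i
    induction i with
    | zero =>
      intro j hj
      interval_cases j
      have hyb0 : yb 0 = (build hXrefl hgt hτpos []).w (n 0) - (build hXrefl hgt hτpos []).z := by
        show yval hXrefl hgt hτpos (L 0) = _
        rw [hL0, yval_concat]
      have h1 : (N 0).ys = (build hXrefl hgt hτpos []).ys ++ [yb 0] := by
        show (build hXrefl hgt hτpos (L 0)).ys = _
        rw [hL0, build_concat_ys, hyb0]
      rw [h1]
      exact List.mem_append_right _ (List.mem_singleton_self _)
    | succ i ih =>
      intro j hj
      have hybs : yb (i+1) = (build hXrefl hgt hτpos (L i)).w (n (i+1))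
          - (build hXrefl hgt hτpos (L i)).z := by
        show yval hXrefl hgt hτpos (L (i+1)) = _
        rw [hLsucc, yval_concat]
      have h1 : (N (i+1)).ys = (N i).ys ++ [yb (i+1)] := by
        show (build hXrefl hgt hτpos (L (i+1))).ys
            = (build hXrefl hgt hτpos (L i)).ys ++ [yb (i+1)]
        rw [hLsucc, build_concat_ys, hybs]
      rw [h1]
      rcases Nat.lt_or_ge j (i+1) with h | h
      · exact List.mem_append_left _ (ih j (Nat.lt_succ_iff.1 h))
      · have : j = i + 1 := le_antisymm hj h
        rw [this]
        exact List.mem_append_right _ (List.mem_singleton_self _)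
  -- cross terms
  have hcross : ∀ i j, i ≠ j → |G i (yb j)| ≤ τ * ((2:ℝ)⁻¹^i * (2:ℝ)⁻¹^j) := by
    intro i j hij
    rcases Nat.lt_or_ge i j with h | h
    · -- i < j : use hsmall₂ at the node below position j
      obtain ⟨l, hl, hNl, hlen⟩ := hdec j
      have h1 : yb j = (build hXrefl hgt hτpos l).w (n j) - (build hXrefl hgt hτpos l).z := by
        show yval hXrefl hgt hτpos (L j) = _
        rw [hl, yval_concat]
      have hNψ : (N j).ψ = (build hXrefl hgt hτpos l).ψ
          ++ [(build hXrefl hgt hτpos l).σ (n j)] := by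
        rw [hNl, build_concat_ψ]
      have hrstep : (List.range (j+1)).map n' = (List.range j).map n' ++ [n' j] := by
        rw [List.range_succ]
        simp
      have h2 : (build hXrefl hgt hτpos l).ψ = (List.range j).map n' := by
        have h0 : (build hXrefl hgt hτpos l).ψ ++ [(build hXrefl hgt hτpos l).σ (n j)]
            = (List.range j).map n' ++ [n' j] := by rw [← hNψ, hψbr j, hrstep]
        exact (List.append_inj' h0 rfl).1
      have h4 : (N i).ψ = ((build hXrefl hgt hτpos l).ψ).take (i+1) := by
        rw [h2, ← List.map_take, List.take_range]
        have hmin : (i+1) ⊓ j = i + 1 := by omega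
        rw [hmin, hψbr i]
      have h5 := (build hXrefl hgt hτpos l).hsmall₂ (n j) i (by rw [hlen]; exact h)
      rw [← h1] at h5
      rw [hlen] at h5
      have h6 : G i (yb j) = gt (((build hXrefl hgt hτpos l).ψ).take (i+1)) (yb j) := by
        show gt ((N i).ψ) (yb j) = _
        rw [h4]
      rw [h6]
      calc |gt (((build hXrefl hgt hτpos l).ψ).take (i+1)) (yb j)| ≤ τ * (4:ℝ)⁻¹ ^ (j+1) := h5
      _ ≤ τ * ((2:ℝ)⁻¹^i * (2:ℝ)⁻¹^j) :=
          mul_le_mul_of_nonneg_left (pow4_le_pow2 h.le) hτpos.le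
    · -- j < i
      have h := lt_of_le_of_ne h (Ne.symm hij)
      obtain ⟨i', rfl⟩ : ∃ i', i = i' + 1 := ⟨i - 1, by omega⟩
      obtain ⟨l, hl, hNl, hlen⟩ := hdec (i'+1)
      have hleq : l = L i' := by
        have h1 : l ++ [n (i'+1)] = L i' ++ [n (i'+1)] := by rw [← hl, hLsucc]
        exact List.append_cancel_right h1
      have hmem : yb j ∈ (build hXrefl hgt hτpos l).ys := by
        rw [hleq]
        exact hysmem i' j (by omega)
      have h5 := (build hXrefl hgt hτpos l).hsmall₁ (n (i'+1)) (yb j) hmem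
      rw [hlen] at h5
      have h6 : G (i'+1) (yb j)
          = gt ((build hXrefl hgt hτpos l).ψ ++ [(build hXrefl hgt hτpos l).σ (n (i'+1))]) (yb j) := by
        show gt ((N (i'+1)).ψ) (yb j) = _
        rw [hNl, build_concat_ψ]
      rw [h6]
      have hji : j ≤ i' + 1 := by omega
      calc |gt ((build hXrefl hgt hτpos l).ψ ++ [(build hXrefl hgt hτpos l).σ (n (i'+1))]) (yb j)|
          ≤ τ * (4:ℝ)⁻¹ ^ ((i'+1)+1) := h5
      _ ≤ τ * ((2:ℝ)⁻¹^j * (2:ℝ)⁻¹^(i'+1)) :=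
          mul_le_mul_of_nonneg_left (pow4_le_pow2 hji) hτpos.le
      _ = τ * ((2:ℝ)⁻¹^(i'+1) * (2:ℝ)⁻¹^j) := by ring
  -- the Y tree branch
  have hYb : ∀ j, yb j = θ j • TreeBranch (Ytree hXrefl hgt hτpos e) n j := by
    intro j
    obtain ⟨l, hl, -, -⟩ := hdec j
    have h1 : TreeBranch (Ytree hXrefl hgt hτpos e) n j = ‖yb j‖⁻¹ • yb j := by
      show Ytree hXrefl hgt hτpos e (L j) = _
      rw [hl, Ytree_concat]
      show _ = ‖yval hXrefl hgt hτpos (L j)‖⁻¹ • yval hXrefl hgt hτpos (L j)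
      rw [hl]
    rw [h1, smul_smul]
    rw [mul_inv_cancel₀ (ne_of_gt (hθpos j)), one_smul]
  -- ===== the domination estimate =====
  refine ⟨n', hmono', ?_⟩
  intro a
  set s : Finset ℕ := a.support with hs
  have hLHS : (a.sum fun i c => c • uStar i) = ∑ i ∈ s, a i • uStar i := rfl
  have hRHS : (a.sum fun i c => c • TreeBranch gt n' i) = ∑ i ∈ s, a i • G i := by
    rw [Finsupp.sum]
    exact Finset.sum_congr rfl (fun i _ => by rw [hGbranch])
  rw [hLHS, hRHS]
  set A : StrongDual ℝ U := ∑ i ∈ s, a i • uStar i with hA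
  set Φ : StrongDual ℝ X := ∑ i ∈ s, a i • G i with hΦ
  -- coefficients are dominated by the norm of A
  have ha_le : ∀ i ∈ s, |a i| ≤ ‖A‖ := by
    intro i hi
    have h1 : A (u i) = a i := by
      rw [hA, ContinuousLinearMap.sum_apply]
      have h2 : ∀ j ∈ s, (a j • uStar j) (u i) = if j = i then a j else 0 := by
        intro j _
        rw [ContinuousLinearMap.smul_apply, hbi j i, smul_eq_mul]
        by_cases h : j = i <;> simp [h]
      rw [Finset.sum_congr rfl h2, Finset.sum_ite_eq' s i (fun j => a j), if_pos hi]
    calc |a i| = |A (u i)| := by rw [h1]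
    _ ≤ ‖A‖ * ‖u i‖ := A.le_opNorm _
    _ = ‖A‖ := by rw [hun i, mul_one]
  -- main pointwise bound
  have key : ∀ v : U, |A v| ≤ (2*C/(1-2*τ)) * ‖Φ‖ * ‖v‖ + (4*τ/(1-2*τ)) * ‖A‖ * ‖v‖ := by
    intro v
    set c : ℕ → ℝ := fun i => uStar i v with hc
    set d : ℕ → ℝ := fun j => c j / (G j (yb j)) with hd
    have hcle : ∀ j, |c j| ≤ ‖v‖ := fun j => uStar_norm_le huu hut hun hbi j v
    have hdle : ∀ j, |d j| ≤ ‖v‖ / (1-2*τ) := by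
      intro j
      simp only [hd]
      rw [abs_div, abs_of_pos (hGpos j)]
      exact div_le_div₀ (norm_nonneg v) (hcle j) h2τ (hdiag j)
    set z' : X := ∑ j ∈ s, d j • yb j with hz'
    have hAv : A v = ∑ i ∈ s, a i * c i := by
      rw [hA, ContinuousLinearMap.sum_apply]
      exact Finset.sum_congr rfl (fun i _ => by rw [ContinuousLinearMap.smul_apply, smul_eq_mul])
    have hΦz : Φ z' = ∑ i ∈ s, a i * (∑ j ∈ s, d j * G i (yb j)) := by
      rw [hΦ, ContinuousLinearMap.sum_apply]
      refine Finset.sum_congr rfl (fun i _ => ?_)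
      rw [ContinuousLinearMap.smul_apply, smul_eq_mul, hz', map_sum]
      congr 1
      refine Finset.sum_congr rfl (fun j _ => ?_)
      rw [map_smul, smul_eq_mul]
    set E : ℝ := ∑ i ∈ s, a i * (∑ j ∈ s.erase i, d j * G i (yb j)) with hE
    have hsplit : Φ z' = (∑ i ∈ s, a i * c i) + E := by
      rw [hΦz, hE, ← Finset.sum_add_distrib]
      refine Finset.sum_congr rfl (fun i hi => ?_)
      have h1 : ∑ j ∈ s, d j * G i (yb j)
          = d i * G i (yb i) + ∑ j ∈ s.erase i, d j * G i (yb j) :=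
        (Finset.add_sum_erase s _ hi).symm
      have h2 : d i * G i (yb i) = c i :=
        div_mul_cancel₀ _ (ne_of_gt (hGpos i))
      rw [h1, h2]
      ring
    have hAveq : A v = Φ z' - E := by rw [hsplit, hAv]; ring
    -- bound on ‖z'‖
    have hz'bound : ‖z'‖ ≤ 2*C/(1-2*τ) * ‖v‖ := by
      set b : ℕ →₀ ℝ := Finsupp.onFinset s (fun j => if j ∈ s then d j * θ j else 0)
        (fun j hj => by by_contra h; simp [h] at hj) with hb
      have hbsupp : b.support ⊆ s := by
        intro j hj
        by_contra h
        rw [Finsupp.mem_support_iff, hb, Finsupp.onFinset_apply, if_neg h] at hj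
        exact hj rfl
      have hb1 : (b.sum fun i r => r • TreeBranch (Ytree hXrefl hgt hτpos e) n i) = z' := by
        rw [Finsupp.sum_of_support_subset b hbsupp _ (fun i _ => by rw [zero_smul])]
        rw [hz']
        refine Finset.sum_congr rfl (fun j hj => ?_)
        rw [hb, Finsupp.onFinset_apply, if_pos hj]
        rw [hYb j, smul_smul]
      have hb2 : (b.sum fun i r => r • u i) = ∑ j ∈ s, (d j * θ j) • u j := by
        rw [Finsupp.sum_of_support_subset b hbsupp _ (fun i _ => by rw [zero_smul])]
        refine Finset.sum_congr rfl (fun j hj => ?_)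
        rw [hb, Finsupp.onFinset_apply, if_pos hj]
      have h3 := hdom b
      rw [hb1, hb2] at h3
      set t : ℕ → ℝ := fun j => if c j = 0 then 0 else θ j / (G j (yb j)) with ht
      have htc : ∀ j, t j * c j = d j * θ j := by
        intro j
        by_cases h : c j = 0
        · have hdj : d j = 0 := by
            simp only [hd]
            rw [h]
            exact zero_div _
          simp only [ht]
          rw [if_pos h, h, hdj]
          ring
        · simp only [ht, hd]
          rw [if_neg h]
          ring
      have htle : ∀ j, |t j| ≤ 2/(1-2*τ) := by
        intro j
        simp only [ht]
        by_cases h : c j = 0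
        · rw [if_pos h, abs_zero]
          positivity
        · rw [if_neg h, abs_div, abs_of_pos (hGpos j), abs_of_pos (hθpos j)]
          exact div_le_div₀ (by norm_num) (hθub j) h2τ (hdiag j)
      have h4 : ∑ j ∈ s, (d j * θ j) • u j = ∑ j ∈ s, (t j * c j) • u j :=
        Finset.sum_congr rfl (fun j _ => by rw [htc j])
      have h5 : ‖∑ j ∈ s, (t j * c j) • u j‖ ≤ (2/(1-2*τ)) * ‖∑ j ∈ s, c j • u j‖ :=
        uncond_scale huu s c t (by positivity) htle
      have h6 : ‖∑ j ∈ s, c j • u j‖ ≤ ‖v‖ := uncond_proj huu hut hbi s v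
      calc ‖z'‖ ≤ C * ‖∑ j ∈ s, (d j * θ j) • u j‖ := h3
      _ = C * ‖∑ j ∈ s, (t j * c j) • u j‖ := by rw [h4]
      _ ≤ C * ((2/(1-2*τ)) * ‖∑ j ∈ s, c j • u j‖) :=
          mul_le_mul_of_nonneg_left h5 (by linarith)
      _ ≤ C * ((2/(1-2*τ)) * ‖v‖) := by
          refine mul_le_mul_of_nonneg_left ?_ (by linarith)
          exact mul_le_mul_of_nonneg_left h6 (by positivity)
      _ = 2*C/(1-2*τ) * ‖v‖ := by ring
    -- bound on E
    have hEbound : |E| ≤ (4*τ/(1-2*τ)) * ‖A‖ * ‖v‖ := by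
      have h1 : |E| ≤ ∑ i ∈ s, |a i| * (∑ j ∈ s.erase i, |d j| * |G i (yb j)|) := by
        rw [hE]
        calc |∑ i ∈ s, a i * (∑ j ∈ s.erase i, d j * G i (yb j))|
            ≤ ∑ i ∈ s, |a i * (∑ j ∈ s.erase i, d j * G i (yb j))| :=
            Finset.abs_sum_le_sum_abs _ _
        _ ≤ ∑ i ∈ s, |a i| * (∑ j ∈ s.erase i, |d j| * |G i (yb j)|) := by
            refine Finset.sum_le_sum (fun i _ => ?_)
            rw [abs_mul]
            refine mul_le_mul_of_nonneg_left ?_ (abs_nonneg _)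
            calc |∑ j ∈ s.erase i, d j * G i (yb j)|
                ≤ ∑ j ∈ s.erase i, |d j * G i (yb j)| := Finset.abs_sum_le_sum_abs _ _
            _ = ∑ j ∈ s.erase i, |d j| * |G i (yb j)| := by
                refine Finset.sum_congr rfl (fun j _ => abs_mul _ _)
      have h2 : ∀ i ∈ s, ∑ j ∈ s.erase i, |d j| * |G i (yb j)|
          ≤ (‖v‖/(1-2*τ)) * (τ * ((2:ℝ)⁻¹^i * 2)) := by
        intro i hi
        have h3 : ∀ j ∈ s.erase i, |d j| * |G i (yb j)|
            ≤ (‖v‖/(1-2*τ)) * (τ * ((2:ℝ)⁻¹^i * (2:ℝ)⁻¹^j)) := by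
          intro j hj
          have hne : i ≠ j := fun h => (Finset.mem_erase.1 hj).1 h.symm
          have h4 := hcross i j hne
          have h5 := hdle j
          have h6 : (0:ℝ) ≤ |G i (yb j)| := abs_nonneg _
          have h7 : (0:ℝ) ≤ ‖v‖/(1-2*τ) := by positivity
          calc |d j| * |G i (yb j)| ≤ (‖v‖/(1-2*τ)) * |G i (yb j)| :=
              mul_le_mul_of_nonneg_right h5 h6
          _ ≤ (‖v‖/(1-2*τ)) * (τ * ((2:ℝ)⁻¹^i * (2:ℝ)⁻¹^j)) :=
              mul_le_mul_of_nonneg_left h4 h7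
        calc ∑ j ∈ s.erase i, |d j| * |G i (yb j)|
            ≤ ∑ j ∈ s.erase i, (‖v‖/(1-2*τ)) * (τ * ((2:ℝ)⁻¹^i * (2:ℝ)⁻¹^j)) :=
            Finset.sum_le_sum h3
        _ ≤ ∑ j ∈ s, (‖v‖/(1-2*τ)) * (τ * ((2:ℝ)⁻¹^i * (2:ℝ)⁻¹^j)) :=
            Finset.sum_le_sum_of_subset_of_nonneg (Finset.erase_subset _ _)
              (fun j _ _ => by positivity)
        _ = (‖v‖/(1-2*τ)) * τ * (2:ℝ)⁻¹^i * (∑ j ∈ s, (2:ℝ)⁻¹^j) := by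
            rw [Finset.mul_sum]
            refine Finset.sum_congr rfl (fun j _ => by ring)
        _ ≤ (‖v‖/(1-2*τ)) * τ * (2:ℝ)⁻¹^i * 2 := by
            refine mul_le_mul_of_nonneg_left (geom_finset_le s) (by positivity)
        _ = (‖v‖/(1-2*τ)) * (τ * ((2:ℝ)⁻¹^i * 2)) := by ring
      have h8 : |E| ≤ ∑ i ∈ s, ‖A‖ * ((‖v‖/(1-2*τ)) * (τ * ((2:ℝ)⁻¹^i * 2))) := by
        refine le_trans h1 (Finset.sum_le_sum (fun i hi => ?_))
        have h9 : (0:ℝ) ≤ ∑ j ∈ s.erase i, |d j| * |G i (yb j)| :=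
          Finset.sum_nonneg (fun j _ => mul_nonneg (abs_nonneg _) (abs_nonneg _))
        calc |a i| * (∑ j ∈ s.erase i, |d j| * |G i (yb j)|)
            ≤ ‖A‖ * (∑ j ∈ s.erase i, |d j| * |G i (yb j)|) :=
            mul_le_mul_of_nonneg_right (ha_le i hi) h9
        _ ≤ ‖A‖ * ((‖v‖/(1-2*τ)) * (τ * ((2:ℝ)⁻¹^i * 2))) :=
            mul_le_mul_of_nonneg_left (h2 i hi) (norm_nonneg _)
      calc |E| ≤ ∑ i ∈ s, ‖A‖ * ((‖v‖/(1-2*τ)) * (τ * ((2:ℝ)⁻¹^i * 2))) := h8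
      _ = ‖A‖ * (‖v‖/(1-2*τ)) * τ * 2 * (∑ i ∈ s, (2:ℝ)⁻¹^i) := by
          rw [Finset.mul_sum]
          refine Finset.sum_congr rfl (fun i _ => by ring)
      _ ≤ ‖A‖ * (‖v‖/(1-2*τ)) * τ * 2 * 2 := by
          refine mul_le_mul_of_nonneg_left (geom_finset_le s) (by positivity)
      _ = (4*τ/(1-2*τ)) * ‖A‖ * ‖v‖ := by ring
    -- combine
    have hfin : |Φ z'| ≤ ‖Φ‖ * ‖z'‖ := by
      have := Φ.le_opNorm z'
      rwa [Real.norm_eq_abs] at this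
    calc |A v| = |Φ z' - E| := by rw [hAveq]
    _ ≤ |Φ z'| + |E| := abs_sub _ _
    _ ≤ ‖Φ‖ * (2*C/(1-2*τ) * ‖v‖) + (4*τ/(1-2*τ)) * ‖A‖ * ‖v‖ := by
        refine add_le_add (le_trans hfin ?_) hEbound
        exact mul_le_mul_of_nonneg_left hz'bound (norm_nonneg _)
    _ = (2*C/(1-2*τ)) * ‖Φ‖ * ‖v‖ + (4*τ/(1-2*τ)) * ‖A‖ * ‖v‖ := by ring
  -- conclude via the operator norm
  have hAbound : ‖A‖ ≤ (2*C/(1-2*τ)) * ‖Φ‖ + (4*τ/(1-2*τ)) * ‖A‖ := by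
    refine A.opNorm_le_bound ?_ (fun v => ?_)
    · have h1 : (0:ℝ) ≤ (2*C/(1-2*τ)) * ‖Φ‖ := by positivity
      have h2 : (0:ℝ) ≤ (4*τ/(1-2*τ)) * ‖A‖ := by positivity
      linarith
    · have := key v
      rw [Real.norm_eq_abs]
      calc |A v| ≤ (2*C/(1-2*τ)) * ‖Φ‖ * ‖v‖ + (4*τ/(1-2*τ)) * ‖A‖ * ‖v‖ := this
      _ = ((2*C/(1-2*τ)) * ‖Φ‖ + (4*τ/(1-2*τ)) * ‖A‖) * ‖v‖ := by ring
  -- final arithmetic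
  have hAn : (0:ℝ) ≤ ‖A‖ := norm_nonneg _
  have hΦn : (0:ℝ) ≤ ‖Φ‖ := norm_nonneg _
  have h1 : (1-2*τ) * ‖A‖ ≤ 2*C*‖Φ‖ + 4*τ*‖A‖ := by
    have e1 : (2*C/(1-2*τ)) * ‖Φ‖ = 2*C*‖Φ‖/(1-2*τ) := div_mul_eq_mul_div _ _ _
    have e2 : (4*τ/(1-2*τ)) * ‖A‖ = 4*τ*‖A‖/(1-2*τ) := div_mul_eq_mul_div _ _ _
    rw [e1, e2, ← add_div, le_div_iff₀ h2τ] at hAbound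
    linarith
  exact final_arith hAn hΦn hC hε hτpos hτ100 hτε h1
end

section
/- Let V and U be Banach spaces with normalized 1-unconditional bases (v_i) and (u_i), and assume that every subsequence of (u_i) dominates every normalized block sequence of (v_i) and that every subsequence of (v_i) is dominated by every normalized block sequence of (u_i). Let Z be a Banach space with an FDD (E_i). If (E_i) satisfies U-upper estimates in Z, then (E_i) also satisfies U-upper estimates in Z_V(E). -/
open Filter Topology
open scoped ENNReal

namespace S7

open Finsupp

section Basic
variable {V : Type*} [NormedAddCommGroup V] [NormedSpace ℝ V]

/-- The linear combination of basis vectors with finitely supported coefficients. -/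
noncomputable def blk (v : ℕ → V) (r : ℕ →₀ ℝ) : V := r.sum fun i c => c • v i

lemma blk_eq_lc (v : ℕ → V) (r : ℕ →₀ ℝ) :
    blk v r = Finsupp.linearCombination ℝ v r := by
  simp [blk, Finsupp.linearCombination_apply]

lemma blk_add (v : ℕ → V) (r s : ℕ →₀ ℝ) : blk v (r + s) = blk v r + blk v s := by
  simp [blk_eq_lc, map_add]

lemma blk_smul (v : ℕ → V) (c : ℝ) (r : ℕ →₀ ℝ) : blk v (c • r) = c • blk v r := by
  simp [blk_eq_lc, map_smul]

lemma blk_zero (v : ℕ → V) : blk v 0 = 0 := by simp [blk]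

lemma blk_eq_sum (v : ℕ → V) (r : ℕ →₀ ℝ) {s : Finset ℕ} (h : r.support ⊆ s) :
    blk v r = ∑ i ∈ s, r i • v i :=
  Finsupp.sum_of_support_subset r h _ (by simp)

lemma blk_single (v : ℕ → V) (i : ℕ) (c : ℝ) : blk v (Finsupp.single i c) = c • v i := by
  simp [blk, Finsupp.sum_single_index]

lemma uncond_mono {v : ℕ → V} (hv : SeqUncond v) (s : Finset ℕ) (c d : ℕ → ℝ)
    (h : ∀ i ∈ s, |c i| ≤ |d i|) : ‖∑ i ∈ s, c i • v i‖ ≤ ‖∑ i ∈ s, d i • v i‖ := by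
  classical
  set ε : ℕ → ℝ := fun i => if i ∈ s then (if d i = 0 then 0 else c i / d i) else 0 with hεdef
  have hε : ∀ i, |ε i| ≤ 1 := by
    intro i
    simp only [hεdef]
    split_ifs with h1 h2
    · simp
    · rw [abs_div]
      exact div_le_one_of_le₀ (h i h1) (abs_nonneg _)
    · simp
  have key := hv s d ε hε
  have heq : ∀ i ∈ s, (ε i * d i) • v i = c i • v i := by
    intro i hi
    by_cases h2 : d i = 0
    · have hc : c i = 0 := by
        have := h i hi
        rw [h2, abs_zero] at this
        exact abs_eq_zero.mp (le_antisymm this (abs_nonneg _))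
      simp [hεdef, hi, h2, hc]
    · simp only [hεdef, if_pos hi, if_neg h2]
      rw [div_mul_cancel₀ _ h2]
  calc ‖∑ i ∈ s, c i • v i‖ = ‖∑ i ∈ s, (ε i * d i) • v i‖ := by
        rw [Finset.sum_congr rfl heq]
    _ ≤ ‖∑ i ∈ s, d i • v i‖ := key

lemma blk_mono {v : ℕ → V} (hv : SeqUncond v) {A B : ℕ →₀ ℝ}
    (h : ∀ i, |A i| ≤ |B i|) : ‖blk v A‖ ≤ ‖blk v B‖ := by
  classical
  have hs : A.support ⊆ A.support ∪ B.support := Finset.subset_union_left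
  have hs' : B.support ⊆ A.support ∪ B.support := Finset.subset_union_right
  rw [blk_eq_sum v A hs, blk_eq_sum v B hs']
  exact uncond_mono hv _ _ _ (fun i _ => h i)

lemma abs_coord_le_norm_blk {v : ℕ → V} (hv : SeqUncond v) (hn : SeqNormalized v)
    (A : ℕ →₀ ℝ) (i : ℕ) : |A i| ≤ ‖blk v A‖ := by
  classical
  have h1 : ‖blk v (Finsupp.single i (A i))‖ ≤ ‖blk v A‖ := by
    refine blk_mono hv (fun j => ?_)
    rcases eq_or_ne i j with rfl | hne
    · simp
    · rw [Finsupp.single_eq_of_ne hne.symm]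
      simpa using abs_nonneg (B j)
  rw [blk_single, norm_smul, hn i, mul_one, Real.norm_eq_abs] at h1
  exact h1

end Basic

end S7
namespace S7

open Finsupp

section Comb
variable {V : Type*} [NormedAddCommGroup V] [NormedSpace ℝ V]

/-- Successive supports for a family of finitely supported coefficient vectors. -/
def SuccSupp (r : ℕ → ℕ →₀ ℝ) : Prop :=
  ∀ j, ∀ i ∈ (r j).support, ∀ i' ∈ (r (j + 1)).support, i < i'

lemma supp_ne_of_blk_ne {v : ℕ → V} {r : ℕ →₀ ℝ} (h : blk v r ≠ 0) : r.support.Nonempty := by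
  rcases Finset.eq_empty_or_nonempty r.support with he | hne
  · exact absurd (by rw [Finsupp.support_eq_empty.mp he, blk_zero]) h
  · exact hne

lemma succSupp_lt {r : ℕ → ℕ →₀ ℝ} (hne : ∀ j, (r j).support.Nonempty) (h : SuccSupp r) :
    ∀ {j j' : ℕ}, j < j' → ∀ i ∈ (r j).support, ∀ i' ∈ (r j').support, i < i' := by
  intro j j' hjj'
  induction j' with
  | zero => omega
  | succ j'' ih =>
    rcases Nat.lt_succ_iff_lt_or_eq.mp hjj' with h1 | rfl
    · intro i hi i' hi'
      obtain ⟨m, hm⟩ := hne j''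
      exact lt_trans (ih h1 i hi m hm) (h j'' m hm i' hi')
    · exact h j

lemma succSupp_le_mem {r : ℕ → ℕ →₀ ℝ} (hne : ∀ j, (r j).support.Nonempty) (h : SuccSupp r) :
    ∀ j, ∀ i ∈ (r j).support, j ≤ i := by
  intro j
  induction j with
  | zero => intro i _; omega
  | succ m ih =>
    intro i hi
    obtain ⟨i'', hi''⟩ := hne m
    have := h m i'' hi'' i hi
    have := ih i'' hi''
    omega

lemma succSupp_disjoint {r : ℕ → ℕ →₀ ℝ} (hne : ∀ j, (r j).support.Nonempty)
    (h : SuccSupp r) {i j j' : ℕ} (hj : i ∈ (r j).support) (hj' : i ∈ (r j').support) :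
    j = j' := by
  rcases lt_trichotomy j j' with hlt | heq | hgt
  · exact absurd (succSupp_lt hne h hlt i hj i hj') (lt_irrefl i)
  · exact heq
  · exact absurd (succSupp_lt hne h hgt i hj' i hj) (lt_irrefl i)

/-- Coordinates of a combination `∑ⱼ aⱼ • r j` are monotone ∈ the coefficients, provided the
supports of the `r j` are pairwise disjoint. -/
lemma comb_abs_coord_mono {r : ℕ → ℕ →₀ ℝ}
    (hdisj : ∀ i j j', i ∈ (r j).support → i ∈ (r j').support → j = j')
    {a b : ℕ →₀ ℝ} (hab : ∀ j, |a j| ≤ |b j|) (i : ℕ) :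
    |(a.sum fun j c => c • r j) i| ≤ |(b.sum fun j c => c • r j) i| := by
  classical
  have hsupp : a.support ⊆ b.support := by
    intro j hj
    simp only [Finsupp.mem_support_iff] at hj ⊢
    intro hb
    have := hab j
    rw [hb, abs_zero] at this
    exact hj (abs_eq_zero.mp (le_antisymm this (abs_nonneg _)))
  have key : ∀ (c : ℕ →₀ ℝ), c.support ⊆ b.support →
      (c.sum fun j x => x • r j) i = ∑ j ∈ b.support, c j * (r j) i := by
    intro c hc
    rw [Finsupp.sum_apply]
    rw [Finsupp.sum_of_support_subset c hc (fun j x => (x • r j) i) (by simp)]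
    simp [Finsupp.smul_apply]
  rw [key a hsupp, key b (subset_refl _)]
  by_cases hex : ∃ j₀, (r j₀) i ≠ 0
  · obtain ⟨j₀, hj₀⟩ := hex
    have huniq : ∀ j, j ≠ j₀ → (r j) i = 0 := by
      intro j hj
      by_contra hne
      exact hj (hdisj i j j₀ (Finsupp.mem_support_iff.mpr hne) (Finsupp.mem_support_iff.mpr hj₀))
    have h1 : ∀ (c : ℕ →₀ ℝ), c.support ⊆ b.support →
        ∑ j ∈ b.support, c j * (r j) i = c j₀ * (r j₀) i := by
      intro c hc
      refine Finset.sum_eq_single j₀ (fun j _ hj => by rw [huniq j hj, mul_zero]) ?_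
      intro hnotmem
      have : c j₀ = 0 := Finsupp.notMem_support_iff.mp (fun hmem => hnotmem (hc hmem))
      rw [this, zero_mul]
    rw [h1 a hsupp, h1 b (subset_refl _), abs_mul, abs_mul]
    exact mul_le_mul_of_nonneg_right (hab j₀) (abs_nonneg _)
  · push_neg at hex
    have hz : ∀ (c : ℕ →₀ ℝ), ∑ j ∈ b.support, c j * (r j) i = 0 := by
      intro c; exact Finset.sum_eq_zero (fun j _ => by rw [hex j, mul_zero])
    rw [hz a, hz b]

/-- A combination of combinations is a combination. -/
lemma comb_blk (v : ℕ → V) (r : ℕ → ℕ →₀ ℝ) (a : ℕ →₀ ℝ) :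
    (a.sum fun j c => c • blk v (r j)) = blk v (a.sum fun j c => c • r j) := by
  classical
  rw [blk_eq_lc, map_finsuppSum]
  refine Finsupp.sum_congr (fun j _ => ?_)
  rw [map_smul, ← blk_eq_lc]

/-- Block coordinate bound: with normalized disjointly supported blocks,
`|a j|` is at most the norm of the combination. -/
lemma comb_abs_coeff_le {v : ℕ → V} (hv : SeqUncond v) {r : ℕ → ℕ →₀ ℝ}
    (hdisj : ∀ i j j', i ∈ (r j).support → i ∈ (r j').support → j = j')
    (hnorm : ∀ j, ‖blk v (r j)‖ = 1) (a : ℕ →₀ ℝ) (j : ℕ) :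
    |a j| ≤ ‖a.sum fun i c => c • blk v (r i)‖ := by
  classical
  rw [comb_blk]
  have hs : ((Finsupp.single j (a j)).sum fun i c => c • r i) = a j • r j := by
    rw [Finsupp.sum_single_index (by simp)]
  have hle : ‖blk v ((Finsupp.single j (a j)).sum fun i c => c • r i)‖ ≤
      ‖blk v (a.sum fun i c => c • r i)‖ := by
    refine blk_mono hv (fun i => comb_abs_coord_mono hdisj (fun j' => ?_) i)
    rcases eq_or_ne j j' with rfl | hne
    · simp
    · rw [Finsupp.single_eq_of_ne hne.symm]
      simpa using abs_nonneg (a j')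
  rw [hs, blk_smul, norm_smul, hnorm j, mul_one, Real.norm_eq_abs] at hle
  exact hle

end Comb

end S7
namespace S7

open Finsupp Filter

section FDDlem
variable {Z V : Type*} [NormedAddCommGroup Z] [NormedSpace ℝ Z]
  [NormedAddCommGroup V] [NormedSpace ℝ V]

/-- Finsupp supported on a finset with given values. -/
noncomputable def fsup (s : Finset ℕ) (c : ℕ → ℝ) : ℕ →₀ ℝ :=
  Finsupp.onFinset s (fun i => if i ∈ s then c i else 0) (by
    intro a ha
    by_contra hn
    exact ha (if_neg hn))

lemma fsup_apply (s : Finset ℕ) (c : ℕ → ℝ) (i : ℕ) :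
    fsup s c i = if i ∈ s then c i else 0 := rfl

lemma fsup_support_subset (s : Finset ℕ) (c : ℕ → ℝ) : (fsup s c).support ⊆ s :=
  Finsupp.support_onFinset_subset

lemma fsup_sum {M : Type*} [AddCommMonoid M] (s : Finset ℕ) (c : ℕ → ℝ) (g : ℕ → ℝ → M)
    (hg : ∀ i ∈ s, g i 0 = 0) : (fsup s c).sum g = ∑ i ∈ s, g i (c i) := by
  rw [Finsupp.sum_of_support_subset _ (fsup_support_subset s c) g hg]
  refine Finset.sum_congr rfl (fun i hi => by rw [fsup_apply, if_pos hi])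

lemma blk_fsup (v : ℕ → V) (s : Finset ℕ) (c : ℕ → ℝ) :
    blk v (fsup s c) = ∑ i ∈ s, c i • v i :=
  fsup_sum s c _ (by simp)

variable (F : FDD Z)

lemma proj_eq_zero_of_not_supp {z : Z} {i : ℕ} (h : i ∉ F.supp z) : F.proj i z = 0 := by
  by_contra hn
  exact h hn

lemma projIco_apply_eq (a b : ℕ) (z : Z) :
    F.projIco a b z = ∑ i ∈ Finset.Ico a b, F.proj i z := by
  rw [FDD.projIco, ContinuousLinearMap.sum_apply]

lemma sum_proj_eq_self {z : Z} {N : ℕ} (hN : ∀ i ∈ F.supp z, i < N) :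
    ∑ i ∈ Finset.range N, F.proj i z = z := by
  have hconst : ∀ M, N ≤ M → ∑ i ∈ Finset.range M, F.proj i z = ∑ i ∈ Finset.range N, F.proj i z := by
    intro M hM
    refine (Finset.sum_subset (Finset.range_subset_range.mpr hM) ?_).symm
    intro i _ hi
    simp only [Finset.mem_range, not_lt] at hi
    refine proj_eq_zero_of_not_supp F (fun hmem => ?_)
    exact absurd (hN i hmem) (by omega)
  have h1 : Tendsto (fun M => ∑ i ∈ Finset.range M, F.proj i z) atTop
      (nhds (∑ i ∈ Finset.range N, F.proj i z)) := by
    refine Tendsto.congr' ?_ tendsto_const_nhds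
    filter_upwards [eventually_ge_atTop N] with M hM
    exact (hconst M hM).symm
  exact tendsto_nhds_unique h1 (F.tendsto_partialSum z)

lemma supp_nonempty_of_ne {z : Z} (hz : z ≠ 0) : (F.supp z).Nonempty := by
  by_contra hn
  rw [Set.not_nonempty_iff_eq_empty] at hn
  have : ∑ i ∈ Finset.range 0, F.proj i z = z :=
    sum_proj_eq_self F (fun i hi => by rw [hn] at hi; exact absurd hi (Set.notMem_empty i))
  simp only [Finset.range_zero, Finset.sum_empty] at this
  exact hz this.symm

lemma projIco_eq_self {z : Z} {a b : ℕ} (h : ∀ i ∈ F.supp z, a ≤ i ∧ i < b) :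
    F.projIco a b z = z := by
  rw [projIco_apply_eq]
  have h2 : ∑ i ∈ Finset.Ico a b, F.proj i z = ∑ i ∈ Finset.range b, F.proj i z := by
    refine Finset.sum_subset (fun i hi => Finset.mem_range.mpr (Finset.mem_Ico.mp hi).2) ?_
    intro i _ hi
    refine proj_eq_zero_of_not_supp F (fun hmem => ?_)
    obtain ⟨h3, h4⟩ := h i hmem
    exact hi (Finset.mem_Ico.mpr ⟨h3, h4⟩)
  rw [h2, sum_proj_eq_self F (fun i hi => (h i hi).2)]

lemma projIco_eq_zero {z : Z} {a b : ℕ} (h : ∀ i ∈ F.supp z, i < a ∨ b ≤ i) :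
    F.projIco a b z = 0 := by
  rw [projIco_apply_eq]
  refine Finset.sum_eq_zero (fun i hi => ?_)
  rw [Finset.mem_Ico] at hi
  refine proj_eq_zero_of_not_supp F (fun hmem => ?_)
  rcases h i hmem with h1 | h1 <;> omega

lemma supp_smul_subset (c : ℝ) (z : Z) : F.supp (c • z) ⊆ F.supp z := by
  intro i hi
  simp only [FDD.supp, Set.mem_setOf_eq, map_smul] at hi ⊢
  intro h0
  rw [h0, smul_zero] at hi
  exact hi rfl

/-- Telescoping sum of interval sums. -/
lemma sum_Ico_blocks (g : ℕ → ℝ) (n : ℕ → ℕ) (hmono : Monotone n) (k : ℕ) :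
    ∑ j ∈ Finset.range k, ∑ i ∈ Finset.Ico (n j) (n (j + 1)), g i
      = ∑ i ∈ Finset.Ico (n 0) (n k), g i := by
  induction k with
  | zero => simp
  | succ m ih =>
    rw [Finset.sum_range_succ, ih]
    exact Finset.sum_Ico_consecutive g (hmono (Nat.zero_le m)) (hmono (Nat.le_succ m))

variable {v : ℕ → V}

lemma zvBlockSum_le (hn : SeqNormalized v) {z : Z} (hfin : (F.supp z).Finite)
    {k : ℕ} {n : ℕ → ℕ} (hadm : IsZVAdmissible k n) :
    zvBlockSum F v z k n ≤ ∑ i ∈ hfin.toFinset, ‖F.proj i z‖ := by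
  obtain ⟨hk, hn0, hsm⟩ := hadm
  calc zvBlockSum F v z k n
      ≤ ∑ j ∈ Finset.range k, ‖(‖F.projIco (n j) (n (j + 1)) z‖ • v j)‖ :=
        norm_sum_le _ _
    _ = ∑ j ∈ Finset.range k, ‖F.projIco (n j) (n (j + 1)) z‖ := by
        refine Finset.sum_congr rfl (fun j _ => ?_)
        rw [norm_smul, hn j, mul_one, Real.norm_eq_abs, abs_norm]
    _ ≤ ∑ j ∈ Finset.range k, ∑ i ∈ Finset.Ico (n j) (n (j + 1)), ‖F.proj i z‖ := by
        refine Finset.sum_le_sum (fun j _ => ?_)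
        rw [projIco_apply_eq]
        exact norm_sum_le _ _
    _ = ∑ i ∈ Finset.Ico (n 0) (n k), ‖F.proj i z‖ :=
        sum_Ico_blocks _ n hsm.monotone k
    _ ≤ ∑ i ∈ hfin.toFinset, ‖F.proj i z‖ := by
        rw [show ∑ i ∈ Finset.Ico (n 0) (n k), ‖F.proj i z‖
            = ∑ i ∈ Finset.Ico (n 0) (n k) ∩ hfin.toFinset, ‖F.proj i z‖ from ?_]
        · exact Finset.sum_le_sum_of_subset_of_nonneg Finset.inter_subset_right
            (fun i _ _ => norm_nonneg _)
        · refine (Finset.sum_subset Finset.inter_subset_left ?_).symm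
          intro i hi hni
          refine proj_eq_zero_of_not_supp F (fun hmem => ?_) ▸ norm_zero
          exact hni (Finset.mem_inter.mpr ⟨hi, hfin.mem_toFinset.mpr hmem⟩)

lemma zv_bddAbove (hn : SeqNormalized v) {z : Z} (hfin : (F.supp z).Finite) :
    BddAbove {r | ∃ k n, IsZVAdmissible k n ∧ r = zvBlockSum F v z k n} := by
  refine ⟨∑ i ∈ hfin.toFinset, ‖F.proj i z‖, ?_⟩
  rintro r ⟨k, n, hadm, rfl⟩
  exact zvBlockSum_le F hn hfin hadm

lemma zvBlockSum_le_zvNorm (hn : SeqNormalized v) {z : Z} (hfin : (F.supp z).Finite)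
    {k : ℕ} {n : ℕ → ℕ} (hadm : IsZVAdmissible k n) :
    zvBlockSum F v z k n ≤ zvNorm F v z :=
  le_csSup (zv_bddAbove F hn hfin) ⟨k, n, hadm, rfl⟩

lemma norm_le_zvNorm (hn : SeqNormalized v) {z : Z} (hfin : (F.supp z).Finite) :
    ‖z‖ ≤ zvNorm F v z := by
  set N : ℕ := (hfin.toFinset.sup id) + 1 with hN
  have hadm : IsZVAdmissible 1 (fun t => t * N) := by
    refine ⟨le_refl 1, by simp, ?_⟩
    intro s t hst
    have hNpos : 0 < N := by omega
    exact (Nat.mul_lt_mul_right hNpos).mpr hst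
  have hval : zvBlockSum F v z 1 (fun t => t * N) = ‖z‖ := by
    rw [zvBlockSum]
    simp only [Finset.range_one, Finset.sum_singleton]
    rw [projIco_eq_self F ?_, norm_smul, hn 0, mul_one, Real.norm_eq_abs, abs_norm]
    intro i hi
    have : i ∈ hfin.toFinset := hfin.mem_toFinset.mpr hi
    have : i ≤ hfin.toFinset.sup id := Finset.le_sup (f := id) this
    refine ⟨by omega, ?_⟩
    show i < 1 * N
    omega
  rw [← hval]
  exact zvBlockSum_le_zvNorm F hn hfin hadm

end FDDlem

end S7
namespace S7

open Finsupp Filter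

section Unif
variable {X Y : Type*} [NormedAddCommGroup X] [NormedSpace ℝ X]
  [NormedAddCommGroup Y] [NormedSpace ℝ Y]

/-- A good block family for the basis `x`, within the class `Px`. -/
def GoodFam (x : ℕ → X) (Px : (ℕ →₀ ℝ) → Prop) (ρ : ℕ → ℕ →₀ ℝ) : Prop :=
  (∀ j, Px (ρ j)) ∧ (∀ j, blk x (ρ j) ≠ 0) ∧ (∀ j, ‖blk x (ρ j)‖ = 1) ∧ SuccSupp ρ

/-- The combination `∑ⱼ aⱼ • (blk x (ρ j))`. -/
noncomputable def pairSum (x : ℕ → X) (ρ : ℕ → ℕ →₀ ℝ) (a : ℕ →₀ ℝ) : X :=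
  a.sum fun j c => c • blk x (ρ j)

lemma pairSum_eq_blk (x : ℕ → X) (ρ : ℕ → ℕ →₀ ℝ) (a : ℕ →₀ ℝ) :
    pairSum x ρ a = blk x (a.sum fun j c => c • ρ j) := comb_blk x ρ a

lemma GoodFam.suppNe {x : ℕ → X} {Px : (ℕ →₀ ℝ) → Prop} {ρ : ℕ → ℕ →₀ ℝ}
    (h : GoodFam x Px ρ) : ∀ j, (ρ j).support.Nonempty :=
  fun j => supp_ne_of_blk_ne (h.2.1 j)

lemma GoodFam.disj {x : ℕ → X} {Px : (ℕ →₀ ℝ) → Prop} {ρ : ℕ → ℕ →₀ ℝ}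
    (h : GoodFam x Px ρ) :
    ∀ i j j', i ∈ (ρ j).support → i ∈ (ρ j').support → j = j' :=
  fun _ _ _ hj hj' => succSupp_disjoint h.suppNe h.2.2.2 hj hj'

lemma GoodFam.shift {x : ℕ → X} {Px : (ℕ →₀ ℝ) → Prop} {ρ : ℕ → ℕ →₀ ℝ}
    (h : GoodFam x Px ρ) (Q : ℕ) : GoodFam x Px (fun j => ρ (j + Q)) := by
  refine ⟨fun j => h.1 _, fun j => h.2.1 _, fun j => h.2.2.1 _, ?_⟩
  intro j i hi i' hi'
  simp only at hi hi'
  have e : j + 1 + Q = j + Q + 1 := by omega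
  rw [e] at hi'
  exact h.2.2.2 (j + Q) i hi i' hi'

lemma pairSum_mono {x : ℕ → X} (hx : SeqUncond x) {Px : (ℕ →₀ ℝ) → Prop} {ρ : ℕ → ℕ →₀ ℝ}
    (hρ : GoodFam x Px ρ) {a b : ℕ →₀ ℝ} (hab : ∀ j, |a j| ≤ |b j|) :
    ‖pairSum x ρ a‖ ≤ ‖pairSum x ρ b‖ := by
  rw [pairSum_eq_blk, pairSum_eq_blk]
  exact blk_mono hx (fun i => comb_abs_coord_mono hρ.disj hab i)

lemma pairSum_coeff_le {x : ℕ → X} (hx : SeqUncond x) {Px : (ℕ →₀ ℝ) → Prop}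
    {ρ : ℕ → ℕ →₀ ℝ} (hρ : GoodFam x Px ρ) (a : ℕ →₀ ℝ) (j : ℕ) :
    |a j| ≤ ‖pairSum x ρ a‖ :=
  comb_abs_coeff_le hx hρ.disj hρ.2.2.1 a j


lemma pairSum_add {x : ℕ → X} (τ : ℕ → ℕ →₀ ℝ) (a b : ℕ →₀ ℝ) :
    pairSum x τ (a + b) = pairSum x τ a + pairSum x τ b := by
  rw [pairSum, Finsupp.sum_add_index' (by simp) (fun i b1 b2 => add_smul b1 b2 _)]
  rfl

lemma bijQ (b : ℕ →₀ ℝ) (Q : ℕ) (hb : ∀ j ∈ b.support, Q ≤ j) :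
    Set.BijOn (· + Q) ((· + Q) ⁻¹' (b.support : Set ℕ)) (b.support : Set ℕ) := by
  refine ⟨fun p hp => hp, fun p hp p' hp' hpp' => by simp only at hpp'; omega, ?_⟩
  intro j hj
  refine ⟨j - Q, ?_, ?_⟩
  · simp only [Set.mem_preimage]
    have := hb j hj
    have e : j - Q + Q = j := by omega
    rwa [e]
  · have := hb j hj
    simp only
    omega

lemma pairSum_comap {x : ℕ → X} (τ : ℕ → ℕ →₀ ℝ) {Q : ℕ} {b : ℕ →₀ ℝ}
    (hb : ∀ j ∈ b.support, Q ≤ j) :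
    pairSum x (fun j => τ (j + Q)) (Finsupp.comapDomain (· + Q) b (bijQ b Q hb).injOn)
      = pairSum x τ b :=
  Finsupp.sum_comapDomain (· + Q) b (fun j c => c • blk x (τ j)) (bijQ b Q hb)

lemma pairSum_emb {x : ℕ → X} (gτ τm : ℕ → ℕ →₀ ℝ) (f : ℕ ↪ ℕ) (a : ℕ →₀ ℝ)
    (h : ∀ q ∈ a.support, gτ (f q) = τm q) :
    pairSum x gτ (Finsupp.embDomain f a) = pairSum x τm a := by
  rw [pairSum, Finsupp.sum_embDomain]
  exact Finsupp.sum_congr fun q hq => by rw [h q hq]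

/-- The generic uniformization lemma: if every pair of good families (in the respective
classes) satisfies a domination with *some* constant, then there is a uniform constant. -/
lemma unif {x : ℕ → X} {y : ℕ → Y} (hx : Is1UncondBasis x) (hy : Is1UncondBasis y)
    (Px Py : (ℕ →₀ ℝ) → Prop)
    (Hgen : ∀ ρ σ, GoodFam x Px ρ → GoodFam y Py σ → ∃ c : ℝ, 1 ≤ c ∧
      ∀ a : ℕ →₀ ℝ, ‖pairSum x ρ a‖ ≤ c * ‖pairSum y σ a‖) :
    ∃ c : ℝ, 1 ≤ c ∧ ∀ ρ σ, GoodFam x Px ρ → GoodFam y Py σ →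
      ∀ a : ℕ →₀ ℝ, ‖pairSum x ρ a‖ ≤ c * ‖pairSum y σ a‖ := by
  classical
  by_contra hcon
  push_neg at hcon
  have h : ∀ C : ℝ, 1 ≤ C → ∃ ρ σ, GoodFam x Px ρ ∧ GoodFam y Py σ ∧
      ∃ a : ℕ →₀ ℝ, C * ‖pairSum y σ a‖ < ‖pairSum x ρ a‖ := by
    intro C hC
    obtain ⟨ρ, σ, hρ, hσ, a, ha⟩ := hcon C hC
    exact ⟨ρ, σ, hρ, hσ, a, ha⟩
  -- Step A: localized counterexamples
  have stepA : ∀ (m P : ℕ), ∃ ρ σ, GoodFam x Px ρ ∧ GoodFam y Py σ ∧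
      (∀ i ∈ (ρ 0).support, P < i) ∧ (∀ i ∈ (σ 0).support, P < i) ∧
      ∃ a : ℕ →₀ ℝ, ((m:ℝ) + 1) * ‖pairSum y σ a‖ < ‖pairSum x ρ a‖ := by
    intro m P
    set C : ℝ := (m:ℝ) + 1 with hCdef
    have hC : (1:ℝ) ≤ C := by
      have : (0:ℝ) ≤ (m:ℝ) := Nat.cast_nonneg _
      linarith
    set Q : ℕ := P + 1 with hQ
    have hCQ : (1:ℝ) ≤ C + Q := by
      have : (0:ℝ) ≤ (Q:ℝ) := Nat.cast_nonneg _
      linarith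
    obtain ⟨ρ, σ, hρ, hσ, a, hgt⟩ := h (C + Q) hCQ
    set ρ' : ℕ → ℕ →₀ ℝ := fun j => ρ (j + Q) with hρ'def
    set σ' : ℕ → ℕ →₀ ℝ := fun j => σ (j + Q) with hσ'def
    have hρ'good : GoodFam x Px ρ' := hρ.shift Q
    have hσ'good : GoodFam y Py σ' := hσ.shift Q
    have hlocρ : ∀ i ∈ (ρ' 0).support, P < i := by
      intro i hi
      have hi2 : i ∈ (ρ (0 + Q)).support := hi
      rw [Nat.zero_add] at hi2
      have := succSupp_le_mem hρ.suppNe hρ.2.2.2 Q i hi2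
      omega
    have hlocσ : ∀ i ∈ (σ' 0).support, P < i := by
      intro i hi
      have hi2 : i ∈ (σ (0 + Q)).support := hi
      rw [Nat.zero_add] at hi2
      have := succSupp_le_mem hσ.suppNe hσ.2.2.2 Q i hi2
      omega
    by_cases hD : ∀ b : ℕ →₀ ℝ, ‖pairSum x ρ' b‖ ≤ C * ‖pairSum y σ' b‖
    · -- derive a contradiction with hgt
      exfalso
      set aH : ℕ →₀ ℝ := a.filter (fun j => j < Q) with haH
      set aT : ℕ →₀ ℝ := a.filter (fun j => ¬ j < Q) with haT
      have hHT : aH + aT = a := by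
        ext j
        simp only [haH, haT, Finsupp.add_apply, Finsupp.filter_apply]
        by_cases hj : j < Q <;> simp [hj]
      have hTsupp : ∀ j ∈ aT.support, Q ≤ j := by
        intro j hj
        rw [Finsupp.mem_support_iff] at hj
        by_contra hn
        apply hj
        have hlt : j < Q := by omega
        simp [haT, Finsupp.filter_apply, hlt]
      set a'' : ℕ →₀ ℝ := Finsupp.comapDomain (· + Q) aT
        ((bijQ aT Q hTsupp).injOn) with ha''
      -- head bound
      have hhead : ‖pairSum x ρ aH‖ ≤ (Q:ℝ) * ‖pairSum y σ a‖ := by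
        have h1 : ‖pairSum x ρ aH‖ ≤ ∑ j ∈ aH.support, ‖aH j • blk x (ρ j)‖ :=
          norm_sum_le _ _
        have h2 : ∀ j ∈ aH.support, ‖aH j • blk x (ρ j)‖ ≤ ‖pairSum y σ a‖ := by
          intro j hj
          rw [norm_smul, hρ.2.2.1 j, mul_one, Real.norm_eq_abs]
          have hle : |aH j| ≤ |a j| := by
            simp only [haH, Finsupp.filter_apply]
            by_cases hjq : j < Q <;> simp [hjq, abs_nonneg]
          exact le_trans hle (pairSum_coeff_le hy.2.1 hσ a j)
        have h3 : ∑ j ∈ aH.support, ‖aH j • blk x (ρ j)‖ ≤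
            (aH.support.card : ℝ) * ‖pairSum y σ a‖ := by
          have := Finset.sum_le_card_nsmul aH.support _ _ h2
          rwa [nsmul_eq_mul] at this
        have h4 : (aH.support.card : ℝ) ≤ (Q : ℝ) := by
          have : aH.support ⊆ Finset.range Q := by
            intro j hj
            rw [Finset.mem_range]
            rw [Finsupp.mem_support_iff] at hj
            by_contra hn
            apply hj
            have hlt : ¬ j < Q := by omega
            simp [haH, Finsupp.filter_apply, hlt]
          have := Finset.card_le_card this
          rw [Finset.card_range] at this
          exact_mod_cast this
        calc ‖pairSum x ρ aH‖ ≤ (aH.support.card : ℝ) * ‖pairSum y σ a‖ := le_trans h1 h3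
          _ ≤ (Q:ℝ) * ‖pairSum y σ a‖ :=
              mul_le_mul_of_nonneg_right h4 (norm_nonneg _)
      -- tail bound
      have htailb : ‖pairSum x ρ aT‖ ≤ C * ‖pairSum y σ a‖ := by
        have h1 : ‖pairSum x ρ aT‖ = ‖pairSum x ρ' a''‖ := by
          rw [hρ'def, ha'', pairSum_comap ρ hTsupp]
        have h2 := hD a''
        have h3 : pairSum y σ' a'' = pairSum y σ aT := by
          rw [hσ'def, ha'', pairSum_comap σ hTsupp]
        have h4 : ‖pairSum y σ aT‖ ≤ ‖pairSum y σ a‖ := by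
          refine pairSum_mono hy.2.1 hσ (fun j => ?_)
          simp only [haT, Finsupp.filter_apply]
          by_cases hjq : j < Q <;> simp [hjq, abs_nonneg]
        rw [h1]
        calc ‖pairSum x ρ' a''‖ ≤ C * ‖pairSum y σ' a''‖ := h2
          _ = C * ‖pairSum y σ aT‖ := by rw [h3]
          _ ≤ C * ‖pairSum y σ a‖ := by
              refine mul_le_mul_of_nonneg_left h4 (by linarith)
      have : ‖pairSum x ρ a‖ ≤ (C + Q) * ‖pairSum y σ a‖ := by
        calc ‖pairSum x ρ a‖
            = ‖pairSum x ρ aH + pairSum x ρ aT‖ := by rw [← pairSum_add ρ aH aT, hHT]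
          _ ≤ ‖pairSum x ρ aH‖ + ‖pairSum x ρ aT‖ := norm_add_le _ _
          _ ≤ (Q:ℝ) * ‖pairSum y σ a‖ + C * ‖pairSum y σ a‖ := add_le_add hhead htailb
          _ = (C + Q) * ‖pairSum y σ a‖ := by ring
      linarith
    · push_neg at hD
      obtain ⟨b, hb⟩ := hD
      exact ⟨ρ', σ', hρ'good, hσ'good, hlocρ, hlocσ, b, hb⟩
  -- Step B: gluing
  choose ρf σf hgρ hgσ hlocρ hlocσ af hratio using stepA
  -- recursive bounds
  set bnd : ℕ → ℕ := fun m => Nat.rec 0 (fun m ih =>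
    1 + (Finset.range (((af m ih).support.sup id) + 1)).sup
      (fun p => max ((ρf m ih p).support.sup id) ((σf m ih p).support.sup id))) m
    with hbnddef
  set Rm : ℕ → ℕ → ℕ →₀ ℝ := fun m => ρf m (bnd m) with hRm
  set Sm : ℕ → ℕ → ℕ →₀ ℝ := fun m => σf m (bnd m) with hSm
  set Am : ℕ → ℕ →₀ ℝ := fun m => af m (bnd m) with hAm
  set Km : ℕ → ℕ := fun m => (Am m).support.sup id with hKm
  have bnd_succ : ∀ m, bnd (m + 1) =
      1 + (Finset.range ((Km m) + 1)).sup
        (fun p => max ((Rm m p).support.sup id) ((Sm m p).support.sup id)) := fun m => rfl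
  have hused : ∀ m p, p ≤ Km m →
      (∀ i ∈ (Rm m p).support, i < bnd (m + 1)) ∧
      (∀ i ∈ (Sm m p).support, i < bnd (m + 1)) := by
    intro m p hp
    have hmem : p ∈ Finset.range (Km m + 1) := Finset.mem_range.mpr (by omega)
    constructor
    · intro i hi
      have h1 : i ≤ (Rm m p).support.sup id := Finset.le_sup (f := id) hi
      have h2 : max ((Rm m p).support.sup id) ((Sm m p).support.sup id)
          ≤ (Finset.range (Km m + 1)).sup
            (fun p => max ((Rm m p).support.sup id) ((Sm m p).support.sup id)) :=
        Finset.le_sup (f := fun p => max ((Rm m p).support.sup id) ((Sm m p).support.sup id))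
          hmem
      rw [bnd_succ m]
      omega
    · intro i hi
      have h1 : i ≤ (Sm m p).support.sup id := Finset.le_sup (f := id) hi
      have h2 : max ((Rm m p).support.sup id) ((Sm m p).support.sup id)
          ≤ (Finset.range (Km m + 1)).sup
            (fun p => max ((Rm m p).support.sup id) ((Sm m p).support.sup id)) :=
        Finset.le_sup (f := fun p => max ((Rm m p).support.sup id) ((Sm m p).support.sup id))
          hmem
      rw [bnd_succ m]
      omega
  have hbnd_lt : ∀ m, bnd m < bnd (m + 1) := by
    intro m
    obtain ⟨i, hi⟩ := (hgρ m (bnd m)).suppNe 0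
    have h1 : bnd m < i := hlocρ m (bnd m) i hi
    have h2 : i < bnd (m + 1) := (hused m 0 (Nat.zero_le _)).1 i hi
    omega
  -- offsets
  set o : ℕ → ℕ := fun m => ∑ m' ∈ Finset.range m, (Km m' + 1) with ho
  have o_succ : ∀ m, o (m + 1) = o m + (Km m + 1) := fun m => Finset.sum_range_succ _ m
  have o_zero : o 0 = 0 := rfl
  have ho_ge : ∀ m, m ≤ o m := by
    intro m
    induction m with
    | zero => omega
    | succ p ih => rw [o_succ p]; omega
  have hex : ∀ p, ∃ m, p < o (m + 1) := by
    intro p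
    exact ⟨p, by have := ho_ge (p + 1); omega⟩
  set mIdx : ℕ → ℕ := fun p => Nat.find (hex p) with hmIdx
  have hm1 : ∀ p, p < o (mIdx p + 1) := fun p => Nat.find_spec (hex p)
  have hm2 : ∀ p, o (mIdx p) ≤ p := by
    intro p
    rcases Nat.eq_zero_or_pos (mIdx p) with h0 | hpos
    · rw [h0, o_zero]; omega
    · have := Nat.find_min (hex p) (show mIdx p - 1 < mIdx p by omega)
      push_neg at this
      have e : mIdx p - 1 + 1 = mIdx p := by omega
      rwa [e] at this
  have o_mono : Monotone o := by
    refine monotone_nat_of_le_succ (fun m => ?_)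
    rw [o_succ m]; omega
  have mIdx_eq : ∀ p m, o m ≤ p → p < o (m + 1) → mIdx p = m := by
    intro p m h1 h2
    refine le_antisymm (Nat.find_min' (hex p) h2) ?_
    by_contra hn
    push_neg at hn
    have : o (mIdx p + 1) ≤ o m := o_mono (by omega)
    have := hm1 p
    omega
  have hq : ∀ p, p - o (mIdx p) ≤ Km (mIdx p) := by
    intro p
    have := hm1 p
    rw [o_succ] at this
    have := hm2 p
    omega
  have hdec : ∀ m q, q ≤ Km m → mIdx (o m + q) = m := by
    intro m q hqm
    refine mIdx_eq _ m (by omega) ?_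
    rw [o_succ]
    omega
  -- glued families
  set gρ : ℕ → ℕ →₀ ℝ := fun p => Rm (mIdx p) (p - o (mIdx p)) with hgρdef
  set gσ : ℕ → ℕ →₀ ℝ := fun p => Sm (mIdx p) (p - o (mIdx p)) with hgσdef
  have hglue : ∀ (τ : ℕ → ℕ → ℕ →₀ ℝ),
      (∀ m, GoodFam x Px (τ m) ∨ True) → True := fun _ _ => trivial
  have hsucc : ∀ (τf : ℕ → ℕ → ℕ →₀ ℝ),
      (∀ m, SuccSupp (τf m)) →
      (∀ m p, p ≤ Km m → ∀ i ∈ (τf m p).support, i < bnd (m + 1)) →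
      (∀ m, ∀ i ∈ (τf (m + 1) 0).support, bnd (m + 1) < i) →
      SuccSupp (fun p => τf (mIdx p) (p - o (mIdx p))) := by
    intro τf hsu hbd hloc p i hi i' hi'
    simp only at hi hi'
    set m := mIdx p with hm
    have hom : o m ≤ p := hm2 p
    set q := p - o m with hqdef
    have hpq : p = o m + q := by omega
    have hqK : q ≤ Km m := hq p
    by_cases hcase : q < Km m
    · have hidx : mIdx (p + 1) = m := by
        have : p + 1 = o m + (q + 1) := by omega
        rw [this]
        exact hdec m (q + 1) (by omega)
      rw [hidx] at hi'
      have e : p + 1 - o m = q + 1 := by omega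
      rw [e] at hi'
      exact hsu m q i hi i' hi'
    · have hqe : q = Km m := by omega
      have hp1 : p + 1 = o (m + 1) := by rw [o_succ]; omega
      have hidx : mIdx (p + 1) = m + 1 := by
        rw [hp1]
        have : o (m+1) = o (m+1) + 0 := by omega
        rw [this]
        exact hdec (m + 1) 0 (Nat.zero_le _)
      rw [hidx] at hi'
      have e : p + 1 - o (m + 1) = 0 := by omega
      rw [e] at hi'
      have h1 : i < bnd (m + 1) := hbd m q hqK i hi
      have h2 : bnd (m + 1) < i' := hloc m i' hi'
      omega
  have hgρgood : GoodFam x Px gρ := by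
    refine ⟨fun p => (hgρ _ _).1 _, fun p => (hgρ _ _).2.1 _, fun p => (hgρ _ _).2.2.1 _, ?_⟩
    refine hsucc Rm (fun m => (hgρ m (bnd m)).2.2.2) (fun m p hp => (hused m p hp).1) ?_
    intro m i hi
    exact hlocρ (m + 1) (bnd (m + 1)) i hi
  have hgσgood : GoodFam y Py gσ := by
    refine ⟨fun p => (hgσ _ _).1 _, fun p => (hgσ _ _).2.1 _, fun p => (hgσ _ _).2.2.1 _, ?_⟩
    refine hsucc Sm (fun m => (hgσ m (bnd m)).2.2.2) (fun m p hp => (hused m p hp).2) ?_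
    intro m i hi
    exact hlocσ (m + 1) (bnd (m + 1)) i hi
  obtain ⟨c, hc1, hcdom⟩ := Hgen gρ gσ hgρgood hgσgood
  obtain ⟨m, hm⟩ := exists_nat_ge c
  have hembinj : Function.Injective (fun q => o m + q : ℕ → ℕ) := by
    intro q q' hqq'
    simp only at hqq'
    omega
  set ga : ℕ →₀ ℝ := Finsupp.embDomain ⟨fun q => o m + q, hembinj⟩ (Am m)
    with hga
  have hemb : ∀ q ∈ (Am m).support, ∀ (τf : ℕ → ℕ → ℕ →₀ ℝ),
      τf (mIdx ((⟨fun q => o m + q, hembinj⟩ : ℕ ↪ ℕ) q))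
        ((⟨fun q => o m + q, hembinj⟩ : ℕ ↪ ℕ) q - o (mIdx ((⟨fun q => o m + q, hembinj⟩ : ℕ ↪ ℕ) q))) = τf m q := by
    intro q hq' τf
    have hqK : q ≤ Km m := Finset.le_sup (f := id) hq'
    have hidx : mIdx (o m + q) = m := hdec m q hqK
    simp only [Function.Embedding.coeFn_mk, hidx]
    have e : o m + q - o m = q := by omega
    rw [e]
  have h1 := hcdom ga
  rw [hga, pairSum_emb gρ (Rm m) _ (Am m) (fun q hq' => hemb q hq' Rm),
    pairSum_emb gσ (Sm m) _ (Am m) (fun q hq' => hemb q hq' Sm)] at h1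
  have h2 := hratio m (bnd m)
  have h3 : c * ‖pairSum y (Sm m) (Am m)‖ ≤ ((m:ℝ) + 1) * ‖pairSum y (Sm m) (Am m)‖ := by
    refine mul_le_mul_of_nonneg_right (by linarith) (norm_nonneg _)
  -- hratio : ((m:ℝ)+1) * ‖pairSum y (σf m (bnd m)) (af m (bnd m))‖ < ‖pairSum x (ρf m (bnd m)) (af m (bnd m))‖
  have h4 : ((m:ℝ) + 1) * ‖pairSum y (Sm m) (Am m)‖ < ‖pairSum x (Rm m) (Am m)‖ := h2
  linarith

end Unif

end S7
namespace S7

open Finsupp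

section UnifFin
variable {X Y : Type*} [NormedAddCommGroup X] [NormedSpace ℝ X]
  [NormedAddCommGroup Y] [NormedSpace ℝ Y]

lemma blk_ne_of_norm_one {x : ℕ → X} {r : ℕ →₀ ℝ} (h : ‖blk x r‖ = 1) : blk x r ≠ 0 := by
  intro h0
  rw [h0, norm_zero] at h
  exact one_ne_zero h.symm

lemma blk_single_one_norm {x : ℕ → X} (hn : SeqNormalized x) (i : ℕ) :
    ‖blk x (Finsupp.single i 1)‖ = 1 := by
  rw [blk_single, one_smul]
  exact hn i

/-- Finitary consequence of a uniform domination constant: only the data on the support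
of the coefficients matters. -/
lemma unif_fin {x : ℕ → X} {y : ℕ → Y} (hx : Is1UncondBasis x) (hy : Is1UncondBasis y)
    (Px Py : (ℕ →₀ ℝ) → Prop)
    (hPx : ∀ i, Px (Finsupp.single i 1)) (hPy : ∀ i, Py (Finsupp.single i 1))
    (c : ℝ)
    (hc : ∀ ρ σ, GoodFam x Px ρ → GoodFam y Py σ →
      ∀ a : ℕ →₀ ℝ, ‖pairSum x ρ a‖ ≤ c * ‖pairSum y σ a‖)
    (ρ σ : ℕ → ℕ →₀ ℝ) (a : ℕ →₀ ℝ)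
    (hρP : ∀ j ∈ a.support, Px (ρ j)) (hσP : ∀ j ∈ a.support, Py (σ j))
    (hρn : ∀ j ∈ a.support, ‖blk x (ρ j)‖ = 1) (hσn : ∀ j ∈ a.support, ‖blk y (σ j)‖ = 1)
    (hρo : ∀ j ∈ a.support, ∀ j' ∈ a.support, j < j' →
      ∀ i ∈ (ρ j).support, ∀ i' ∈ (ρ j').support, i < i')
    (hσo : ∀ j ∈ a.support, ∀ j' ∈ a.support, j < j' →
      ∀ i ∈ (σ j).support, ∀ i' ∈ (σ j').support, i < i') :
    ‖pairSum x ρ a‖ ≤ c * ‖pairSum y σ a‖ := by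
  classical
  set T : Finset ℕ := a.support with hT
  set M : ℕ := T.card with hM
  set ι : Fin M ≃o {x // x ∈ T} := T.orderIsoOfFin rfl with hι
  set D : ℕ := 1 + T.sup (fun j => max ((ρ j).support.sup id) ((σ j).support.sup id)) with hD
  have hsupbd : ∀ j ∈ T, (∀ i ∈ (ρ j).support, i < D) ∧ (∀ i ∈ (σ j).support, i < D) := by
    intro j hj
    have h2 : max ((ρ j).support.sup id) ((σ j).support.sup id)
        ≤ T.sup (fun j => max ((ρ j).support.sup id) ((σ j).support.sup id)) :=
      Finset.le_sup (f := fun j => max ((ρ j).support.sup id) ((σ j).support.sup id)) hj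
    constructor
    · intro i hi
      have h1 : i ≤ (ρ j).support.sup id := Finset.le_sup (f := id) hi
      omega
    · intro i hi
      have h1 : i ≤ (σ j).support.sup id := Finset.le_sup (f := id) hi
      omega
  set ρ' : ℕ → ℕ →₀ ℝ :=
    fun p => if h : p < M then ρ (ι ⟨p, h⟩) else Finsupp.single (D + p) 1 with hρ'
  set σ' : ℕ → ℕ →₀ ℝ :=
    fun p => if h : p < M then σ (ι ⟨p, h⟩) else Finsupp.single (D + p) 1 with hσ'
  have hmem : ∀ (p : Fin M), ((ι p : {x // x ∈ T}) : ℕ) ∈ T := fun p => (ι p).2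
  have hιmono : ∀ (p p' : Fin M), p < p' → ((ι p : {x // x ∈ T}) : ℕ) < ((ι p') : ℕ) := by
    intro p p' hpp'
    exact Subtype.coe_lt_coe.mpr (ι.strictMono hpp')
  have hρ'good : GoodFam x Px ρ' := by
    refine ⟨?_, ?_, ?_, ?_⟩
    · intro p
      by_cases h : p < M
      · simp only [hρ', dif_pos h]
        exact hρP _ (hmem ⟨p, h⟩)
      · simp only [hρ', dif_neg h]
        exact hPx _
    · intro p
      by_cases h : p < M
      · simp only [hρ', dif_pos h]
        exact blk_ne_of_norm_one (hρn _ (hmem ⟨p, h⟩))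
      · simp only [hρ', dif_neg h]
        exact blk_ne_of_norm_one (blk_single_one_norm hx.1 _)
    · intro p
      by_cases h : p < M
      · simp only [hρ', dif_pos h]
        exact hρn _ (hmem ⟨p, h⟩)
      · simp only [hρ', dif_neg h]
        exact blk_single_one_norm hx.1 _
    · intro p i hi i' hi'
      by_cases h : p + 1 < M
      · have hp : p < M := by omega
        simp only [hρ', dif_pos h, dif_pos hp] at hi hi'
        refine hρo _ (hmem ⟨p, hp⟩) _ (hmem ⟨p + 1, h⟩) ?_ i hi i' hi'
        exact hιmono ⟨p, hp⟩ ⟨p + 1, h⟩ (by simp [Fin.lt_def])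
      · by_cases hp : p < M
        · simp only [hρ', dif_pos hp, dif_neg h] at hi hi'
          have h1 : i < D := ((hsupbd _ (hmem ⟨p, hp⟩)).1) i hi
          have h2 : i' = D + (p + 1) := by
            rw [Finsupp.support_single_ne_zero _ one_ne_zero] at hi'
            simpa using hi'
          omega
        · have hp1 : ¬ p + 1 < M := by omega
          simp only [hρ', dif_neg hp, dif_neg hp1] at hi hi'
          have h1 : i = D + p := by
            rw [Finsupp.support_single_ne_zero _ one_ne_zero] at hi
            simpa using hi
          have h2 : i' = D + (p + 1) := by
            rw [Finsupp.support_single_ne_zero _ one_ne_zero] at hi'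
            simpa using hi'
          omega
  have hσ'good : GoodFam y Py σ' := by
    refine ⟨?_, ?_, ?_, ?_⟩
    · intro p
      by_cases h : p < M
      · simp only [hσ', dif_pos h]
        exact hσP _ (hmem ⟨p, h⟩)
      · simp only [hσ', dif_neg h]
        exact hPy _
    · intro p
      by_cases h : p < M
      · simp only [hσ', dif_pos h]
        exact blk_ne_of_norm_one (hσn _ (hmem ⟨p, h⟩))
      · simp only [hσ', dif_neg h]
        exact blk_ne_of_norm_one (blk_single_one_norm hy.1 _)
    · intro p
      by_cases h : p < M
      · simp only [hσ', dif_pos h]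
        exact hσn _ (hmem ⟨p, h⟩)
      · simp only [hσ', dif_neg h]
        exact blk_single_one_norm hy.1 _
    · intro p i hi i' hi'
      by_cases h : p + 1 < M
      · have hp : p < M := by omega
        simp only [hσ', dif_pos h, dif_pos hp] at hi hi'
        refine hσo _ (hmem ⟨p, hp⟩) _ (hmem ⟨p + 1, h⟩) ?_ i hi i' hi'
        exact hιmono ⟨p, hp⟩ ⟨p + 1, h⟩ (by simp [Fin.lt_def])
      · by_cases hp : p < M
        · simp only [hσ', dif_pos hp, dif_neg h] at hi hi'
          have h1 : i < D := ((hsupbd _ (hmem ⟨p, hp⟩)).2) i hi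
          have h2 : i' = D + (p + 1) := by
            rw [Finsupp.support_single_ne_zero _ one_ne_zero] at hi'
            simpa using hi'
          omega
        · have hp1 : ¬ p + 1 < M := by omega
          simp only [hσ', dif_neg hp, dif_neg hp1] at hi hi'
          have h1 : i = D + p := by
            rw [Finsupp.support_single_ne_zero _ one_ne_zero] at hi
            simpa using hi
          have h2 : i' = D + (p + 1) := by
            rw [Finsupp.support_single_ne_zero _ one_ne_zero] at hi'
            simpa using hi'
          omega
  -- the compressed coefficients
  set a' : ℕ →₀ ℝ := Finsupp.onFinset (Finset.range M)
    (fun p => if h : p < M then a (ι ⟨p, h⟩) else 0)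
    (by
      intro p hp
      rw [Finset.mem_range]
      by_contra hn
      exact hp (dif_neg hn)) with ha'
  have ha'supp : a'.support ⊆ Finset.range M := Finsupp.support_onFinset_subset
  have keyX : pairSum x ρ' a' = pairSum x ρ a := by
    rw [pairSum, Finsupp.sum_of_support_subset a' ha'supp _ (by simp)]
    rw [← Fin.sum_univ_eq_sum_range (fun p => a' p • blk x (ρ' p)) M]
    have h1 : ∀ p : Fin M, a' (p : ℕ) • blk x (ρ' (p : ℕ))
        = a ((ι p : {x // x ∈ T}) : ℕ) • blk x (ρ ((ι p : {x // x ∈ T}) : ℕ)) := by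
      intro p
      have e1 : a' (p : ℕ) = a ((ι p : {x // x ∈ T}) : ℕ) := by
        show (if h : (p : ℕ) < M then a (ι ⟨(p : ℕ), h⟩) else 0) = _
        rw [dif_pos p.isLt, Fin.eta]
      have e2 : ρ' (p : ℕ) = ρ ((ι p : {x // x ∈ T}) : ℕ) := by
        show (if h : (p : ℕ) < M then ρ (ι ⟨(p : ℕ), h⟩) else _) = _
        rw [dif_pos p.isLt, Fin.eta]
      rw [e1, e2]
    rw [Finset.sum_congr rfl (fun p _ => h1 p)]
    have h2 : ∑ p : Fin M, a ((ι p : {x // x ∈ T}) : ℕ) • blk x (ρ ((ι p : {x // x ∈ T}) : ℕ))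
        = ∑ j ∈ T, a j • blk x (ρ j) := by
      rw [← Finset.sum_coe_sort T (fun j => a j • blk x (ρ j))]
      exact Equiv.sum_comp ι.toEquiv (fun j : {x // x ∈ T} => a (j : ℕ) • blk x (ρ (j : ℕ)))
    rw [h2]
    rfl
  have keyY : pairSum y σ' a' = pairSum y σ a := by
    rw [pairSum, Finsupp.sum_of_support_subset a' ha'supp _ (by simp)]
    rw [← Fin.sum_univ_eq_sum_range (fun p => a' p • blk y (σ' p)) M]
    have h1 : ∀ p : Fin M, a' (p : ℕ) • blk y (σ' (p : ℕ))
        = a ((ι p : {x // x ∈ T}) : ℕ) • blk y (σ ((ι p : {x // x ∈ T}) : ℕ)) := by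
      intro p
      have e1 : a' (p : ℕ) = a ((ι p : {x // x ∈ T}) : ℕ) := by
        show (if h : (p : ℕ) < M then a (ι ⟨(p : ℕ), h⟩) else 0) = _
        rw [dif_pos p.isLt, Fin.eta]
      have e2 : σ' (p : ℕ) = σ ((ι p : {x // x ∈ T}) : ℕ) := by
        show (if h : (p : ℕ) < M then σ (ι ⟨(p : ℕ), h⟩) else _) = _
        rw [dif_pos p.isLt, Fin.eta]
      rw [e1, e2]
    rw [Finset.sum_congr rfl (fun p _ => h1 p)]
    have h2 : ∑ p : Fin M, a ((ι p : {x // x ∈ T}) : ℕ) • blk y (σ ((ι p : {x // x ∈ T}) : ℕ))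
        = ∑ j ∈ T, a j • blk y (σ j) := by
      rw [← Finset.sum_coe_sort T (fun j => a j • blk y (σ j))]
      exact Equiv.sum_comp ι.toEquiv (fun j : {x // x ∈ T} => a (j : ℕ) • blk y (σ (j : ℕ)))
    rw [h2]
    rfl
  calc ‖pairSum x ρ a‖ = ‖pairSum x ρ' a'‖ := by rw [keyX]
    _ ≤ c * ‖pairSum y σ' a'‖ := hc ρ' σ' hρ'good hσ'good a'
    _ = c * ‖pairSum y σ a‖ := by rw [keyY]

end UnifFin

end S7
namespace S7

open Finsupp

section Bridge
variable {V U : Type*} [NormedAddCommGroup V] [NormedSpace ℝ V]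
  [NormedAddCommGroup U] [NormedSpace ℝ U]

/-- The class of singleton coefficient vectors. -/
def Psing : (ℕ →₀ ℝ) → Prop := fun r => ∃ i, r = Finsupp.single i 1

/-- The trivial class. -/
def Pall : (ℕ →₀ ℝ) → Prop := fun _ => True

lemma sing_strictMono {σ : ℕ → ℕ →₀ ℝ} {e : ℕ → ℕ} (hσe : ∀ j, σ j = Finsupp.single (e j) 1)
    (hs : SuccSupp σ) : StrictMono e := by
  refine strictMono_nat_of_lt_succ (fun j => ?_)
  have h1 : e j ∈ (σ j).support := by
    rw [hσe j, Finsupp.support_single_ne_zero _ one_ne_zero]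
    simp
  have h2 : e (j + 1) ∈ (σ (j + 1)).support := by
    rw [hσe (j + 1), Finsupp.support_single_ne_zero _ one_ne_zero]
    simp
  exact hs j _ h1 _ h2

lemma pairSum_sing {u : ℕ → U} {σ : ℕ → ℕ →₀ ℝ} {e : ℕ → ℕ}
    (hσe : ∀ j, σ j = Finsupp.single (e j) 1) (a : ℕ →₀ ℝ) :
    pairSum u σ a = a.sum fun i c => c • u (e i) := by
  refine Finsupp.sum_congr (fun j _ => ?_)
  rw [hσe j, blk_single, one_smul]

lemma exists_c1 {v : ℕ → V} {u : ℕ → U} (hv : Is1UncondBasis v) (hu : Is1UncondBasis u)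
    (h1 : ∀ e : ℕ → ℕ, StrictMono e → ∀ b : ℕ → V, IsBlockSeqOfBasis v b →
      (∀ j, ‖b j‖ = 1) → ∃ c : ℝ, 1 ≤ c ∧ Dominates c (fun i => u (e i)) b) :
    ∃ c : ℝ, 1 ≤ c ∧ ∀ ρ σ, GoodFam v Pall ρ → GoodFam u Psing σ →
      ∀ a : ℕ →₀ ℝ, ‖pairSum v ρ a‖ ≤ c * ‖pairSum u σ a‖ := by
  refine unif hv hu Pall Psing ?_
  intro ρ σ hρ hσ
  choose e hσe using (hσ.1 : ∀ j, Psing (σ j))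
  have hsm : StrictMono e := sing_strictMono hσe hσ.2.2.2
  have hbs : IsBlockSeqOfBasis v (fun j => blk v (ρ j)) :=
    ⟨ρ, fun j => rfl, hρ.2.1, hρ.2.2.2⟩
  obtain ⟨c, hc1, hdom⟩ := h1 e hsm _ hbs hρ.2.2.1
  refine ⟨c, hc1, fun a => ?_⟩
  have := hdom a
  rw [pairSum_sing hσe a]
  exact this

lemma exists_c2 {v : ℕ → V} {u : ℕ → U} (hv : Is1UncondBasis v) (hu : Is1UncondBasis u)
    (h2 : ∀ e : ℕ → ℕ, StrictMono e → ∀ b : ℕ → U, IsBlockSeqOfBasis u b →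
      (∀ j, ‖b j‖ = 1) → ∃ c : ℝ, 1 ≤ c ∧ Dominates c b (fun i => v (e i))) :
    ∃ c : ℝ, 1 ≤ c ∧ ∀ ρ σ, GoodFam v Psing ρ → GoodFam u Pall σ →
      ∀ a : ℕ →₀ ℝ, ‖pairSum v ρ a‖ ≤ c * ‖pairSum u σ a‖ := by
  refine unif hv hu Psing Pall ?_
  intro ρ σ hρ hσ
  choose e hρe using (hρ.1 : ∀ j, Psing (ρ j))
  have hsm : StrictMono e := sing_strictMono hρe hρ.2.2.2
  have hbs : IsBlockSeqOfBasis u (fun j => blk u (σ j)) :=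
    ⟨σ, fun j => rfl, hσ.2.1, hσ.2.2.2⟩
  obtain ⟨c, hc1, hdom⟩ := h2 e hsm _ hbs hσ.2.2.1
  refine ⟨c, hc1, fun a => ?_⟩
  have := hdom a
  rw [pairSum_sing hρe a]
  exact this

end Bridge

end S7

/-- If every subsequence of `(u_i)` dominates every normalized block sequence
of `(v_i)`, every subsequence of `(v_i)` is dominated by every normalized block sequence of
`(u_i)`, and `(E_i)` satisfies `U`-upper estimates in `Z`, then `(E_i)` satisfies `U`-upper
estimates in `Z_V(E)`. -/
theorem statement7 {Z V U : Type*}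
    [NormedAddCommGroup Z] [NormedSpace ℝ Z] [CompleteSpace Z]
    [NormedAddCommGroup V] [NormedSpace ℝ V] [CompleteSpace V]
    [NormedAddCommGroup U] [NormedSpace ℝ U] [CompleteSpace U]
    (F : FDD Z) (v : ℕ → V) (u : ℕ → U)
    (hv : Is1UncondBasis v) (hu : Is1UncondBasis u)
    (h1 : ∀ e : ℕ → ℕ, StrictMono e → ∀ b : ℕ → V, IsBlockSeqOfBasis v b →
      (∀ j, ‖b j‖ = 1) → ∃ c : ℝ, 1 ≤ c ∧ Dominates c (fun i => u (e i)) b)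
    (h2 : ∀ e : ℕ → ℕ, StrictMono e → ∀ b : ℕ → U, IsBlockSeqOfBasis u b →
      (∀ j, ‖b j‖ = 1) → ∃ c : ℝ, 1 ≤ c ∧ Dominates c b (fun i => v (e i)))
    (hupper : ∃ C : ℝ, 1 ≤ C ∧ F.UpperEst C u) :
    ∃ C : ℝ, 1 ≤ C ∧ ∀ z : ℕ → Z, F.IsBlockSeq z → (∀ j, zvNorm F v (z j) = 1) →
      ∀ a : ℕ →₀ ℝ,
        zvNorm F v (a.sum fun j r => r • z j) ≤ C * ‖a.sum fun j r => r • u j‖ := by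
  classical
  obtain ⟨C₀, hC₀, hZup⟩ := hupper
  obtain ⟨c₁, hc₁, H1⟩ := S7.exists_c1 hv hu h1
  obtain ⟨c₂, hc₂, H2⟩ := S7.exists_c2 hv hu h2
  have hCc2 : (1:ℝ) ≤ C₀ * c₂ := le_trans hC₀ (le_mul_of_one_le_right (by linarith) hc₂)
  refine ⟨2 * c₁ + C₀ * c₂, by linarith, ?_⟩
  intro z hz hznorm a
  have hzne : ∀ j, z j ≠ 0 := fun j => (hz.1 j).1
  have hfin : ∀ j, (F.supp (z j)).Finite := fun j => (hz.1 j).2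
  set S : ℕ → Finset ℕ := fun j => (hfin j).toFinset with hS
  have hSmem : ∀ j i, i ∈ S j ↔ i ∈ F.supp (z j) := fun j i => Set.Finite.mem_toFinset _
  have hSne : ∀ j, (S j).Nonempty := by
    intro j
    obtain ⟨i, hi⟩ := S7.supp_nonempty_of_ne F (hzne j)
    exact ⟨i, (hSmem j i).2 hi⟩
  have hord : ∀ {j j' : ℕ}, j < j' → ∀ i ∈ S j, ∀ i' ∈ S j', i < i' := by
    intro j j' hjj'
    induction j' with
    | zero => omega
    | succ m ih =>
      rcases Nat.lt_succ_iff_lt_or_eq.mp hjj' with hlt | rfl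
      · intro i hi i' hi'
        obtain ⟨q, hq⟩ := hSne m
        exact lt_trans (ih hlt i hi q hq)
          (hz.2 m q ((hSmem m q).1 hq) i' ((hSmem (m+1) i').1 hi'))
      · intro i hi i' hi'
        exact hz.2 j i ((hSmem j i).1 hi) i' ((hSmem (j+1) i').1 hi')
  set mn : ℕ → ℕ := fun j => (S j).min' (hSne j) with hmn
  set mx : ℕ → ℕ := fun j => (S j).max' (hSne j) with hmx
  have hmnmem : ∀ j, mn j ∈ S j := fun j => Finset.min'_mem _ _
  have hmxmem : ∀ j, mx j ∈ S j := fun j => Finset.max'_mem _ _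
  have hmn_le : ∀ j, ∀ i ∈ S j, mn j ≤ i := fun j i hi => Finset.min'_le _ i hi
  have hle_mx : ∀ j, ∀ i ∈ S j, i ≤ mx j := fun j i hi => Finset.le_max' _ i hi
  have hmxmn : ∀ {j j' : ℕ}, j < j' → mx j < mn j' :=
    fun h => hord h _ (hmxmem _) _ (hmnmem _)
  have hmnmx : ∀ j, mn j ≤ mx j := fun j => hmn_le j _ (hmxmem j)
  -- norms of blocks
  have hz_zvble : ∀ j (k : ℕ) (n : ℕ → ℕ), IsZVAdmissible k n → zvBlockSum F v (z j) k n ≤ 1 := by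
    intro j k n hadm
    rw [← hznorm j]
    exact S7.zvBlockSum_le_zvNorm F hv.1 (hfin j) hadm
  have hzZ_le_one : ∀ j, ‖z j‖ ≤ 1 := by
    intro j
    rw [← hznorm j]
    exact S7.norm_le_zvNorm F hv.1 (hfin j)
  set RHS : ℝ := ‖a.sum fun j r => r • u j‖ with hRHS
  have hRHSblk : RHS = ‖S7.blk u a‖ := rfl
  have hRHS0 : (0:ℝ) ≤ (2 * c₁ + C₀ * c₂) * RHS :=
    mul_nonneg (by linarith) (norm_nonneg _)
  rw [zvNorm]
  refine Real.sSup_le ?_ hRHS0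
  rintro r ⟨k, n, hadm, rfl⟩
  obtain ⟨hk1, hn0, hnsm⟩ := hadm
  set J : Finset ℕ := a.support with hJ
  set zz : Z := a.sum fun j r => r • z j with hzz
  have hproj : ∀ t : ℕ, F.projIco (n t) (n (t+1)) zz
      = ∑ j ∈ J, a j • F.projIco (n t) (n (t+1)) (z j) := by
    intro t
    rw [hzz, Finsupp.sum, map_sum]
    exact Finset.sum_congr rfl (fun j _ => by rw [map_smul])
  set P : ℕ → ℕ → Z := fun t j => F.projIco (n t) (n (t+1)) (z j) with hP
  set α : ℕ → ℝ := fun t => ∑ j ∈ J.filter (fun j => mn j < n t ∧ n t ≤ mx j),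
    |a j| * ‖P t j‖ with hα
  set β : ℕ → ℝ := fun t => ∑ j ∈ J.filter (fun j => mn j < n (t+1) ∧ n (t+1) ≤ mx j),
    |a j| * ‖P t j‖ with hβ
  set yy : ℕ → Z := fun t => ∑ j ∈ J.filter (fun j => n t ≤ mn j ∧ mx j < n (t+1)),
    a j • z j with hyy
  set γ : ℕ → ℝ := fun t => ‖yy t‖ with hγ
  have hα0 : ∀ t, 0 ≤ α t :=
    fun t => Finset.sum_nonneg (fun j _ => mul_nonneg (abs_nonneg _) (norm_nonneg _))
  have hβ0 : ∀ t, 0 ≤ β t :=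
    fun t => Finset.sum_nonneg (fun j _ => mul_nonneg (abs_nonneg _) (norm_nonneg _))
  have hγ0 : ∀ t, 0 ≤ γ t := fun t => norm_nonneg _
  -- the pointwise estimate
  have hptw : ∀ t, ‖F.projIco (n t) (n (t+1)) zz‖ ≤ α t + β t + γ t := by
    intro t
    rw [hproj t]
    set ploc : ℕ → Prop := fun j => n t ≤ mn j ∧ mx j < n (t+1) with hploc
    set pcl : ℕ → Prop := fun j => mn j < n t ∧ n t ≤ mx j with hpcl
    set pcr : ℕ → Prop := fun j => mn j < n (t+1) ∧ n (t+1) ≤ mx j with hpcr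
    set f : ℕ → Z := fun j => a j • F.projIco (n t) (n (t+1)) (z j) with hf
    have hsplit1 : ∑ j ∈ J, f j = ∑ j ∈ J.filter ploc, f j
        + ∑ j ∈ (J.filter (fun j => ¬ ploc j)).filter pcl, f j
        + ∑ j ∈ ((J.filter (fun j => ¬ ploc j)).filter (fun j => ¬ pcl j)).filter pcr, f j
        + ∑ j ∈ ((J.filter (fun j => ¬ ploc j)).filter (fun j => ¬ pcl j)).filter
            (fun j => ¬ pcr j), f j := by
      rw [← Finset.sum_filter_add_sum_filter_not J ploc f]
      rw [← Finset.sum_filter_add_sum_filter_not (J.filter (fun j => ¬ ploc j)) pcl f]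
      rw [← Finset.sum_filter_add_sum_filter_not
        ((J.filter (fun j => ¬ ploc j)).filter (fun j => ¬ pcl j)) pcr f]
      abel
    have hrest : ∑ j ∈ ((J.filter (fun j => ¬ ploc j)).filter (fun j => ¬ pcl j)).filter
        (fun j => ¬ pcr j), f j = 0 := by
      refine Finset.sum_eq_zero (fun j hj => ?_)
      simp only [Finset.mem_filter, hploc, hpcl, hpcr] at hj
      obtain ⟨⟨⟨_, hnl⟩, hncl⟩, hncr⟩ := hj
      push_neg at hnl hncl hncr
      have hzero : F.projIco (n t) (n (t+1)) (z j) = 0 := by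
        refine S7.projIco_eq_zero F (fun i hi => ?_)
        have h1 : mn j ≤ i := hmn_le j i ((hSmem j i).2 hi)
        have h2 : i ≤ mx j := hle_mx j i ((hSmem j i).2 hi)
        by_contra hcon
        push_neg at hcon
        obtain ⟨hc1, hc2⟩ := hcon
        by_cases hcase : mn j < n t
        · have := hncl hcase
          omega
        · push_neg at hcase
          have h3 := hnl (by omega)
          have h4 := hncr (by omega)
          omega
      show a j • F.projIco (n t) (n (t+1)) (z j) = 0
      rw [hzero, smul_zero]
    have hlocsum : ∑ j ∈ J.filter ploc, f j = yy t := by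
      refine Finset.sum_congr rfl (fun j hj => ?_)
      simp only [Finset.mem_filter, hploc] at hj
      show a j • F.projIco (n t) (n (t+1)) (z j) = a j • z j
      congr 1
      refine S7.projIco_eq_self F (fun i hi => ?_)
      have h1 : mn j ≤ i := hmn_le j i ((hSmem j i).2 hi)
      have h2 : i ≤ mx j := hle_mx j i ((hSmem j i).2 hi)
      omega
    have hclsum : ‖∑ j ∈ (J.filter (fun j => ¬ ploc j)).filter pcl, f j‖ ≤ α t := by
      calc ‖∑ j ∈ (J.filter (fun j => ¬ ploc j)).filter pcl, f j‖
          ≤ ∑ j ∈ (J.filter (fun j => ¬ ploc j)).filter pcl, ‖f j‖ := norm_sum_le _ _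
        _ = ∑ j ∈ (J.filter (fun j => ¬ ploc j)).filter pcl, |a j| * ‖P t j‖ := by
            refine Finset.sum_congr rfl (fun j _ => ?_)
            show ‖a j • P t j‖ = |a j| * ‖P t j‖
            rw [norm_smul, Real.norm_eq_abs]
        _ ≤ α t := by
            rw [hα]
            refine Finset.sum_le_sum_of_subset_of_nonneg ?_
              (fun j _ _ => mul_nonneg (abs_nonneg _) (norm_nonneg _))
            rw [Finset.filter_filter]
            intro j hj
            rw [Finset.mem_filter] at hj ⊢
            exact ⟨hj.1, hj.2.2⟩
    have hcrsum : ‖∑ j ∈ ((J.filter (fun j => ¬ ploc j)).filter (fun j => ¬ pcl j)).filter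
        pcr, f j‖ ≤ β t := by
      calc ‖∑ j ∈ ((J.filter (fun j => ¬ ploc j)).filter (fun j => ¬ pcl j)).filter pcr, f j‖
          ≤ ∑ j ∈ ((J.filter (fun j => ¬ ploc j)).filter (fun j => ¬ pcl j)).filter pcr,
            ‖f j‖ := norm_sum_le _ _
        _ = ∑ j ∈ ((J.filter (fun j => ¬ ploc j)).filter (fun j => ¬ pcl j)).filter pcr,
            |a j| * ‖P t j‖ := by
            refine Finset.sum_congr rfl (fun j _ => ?_)
            show ‖a j • P t j‖ = |a j| * ‖P t j‖
            rw [norm_smul, Real.norm_eq_abs]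
        _ ≤ β t := by
            rw [hβ]
            refine Finset.sum_le_sum_of_subset_of_nonneg ?_
              (fun j _ _ => mul_nonneg (abs_nonneg _) (norm_nonneg _))
            rw [Finset.filter_filter, Finset.filter_filter]
            intro j hj
            rw [Finset.mem_filter] at hj ⊢
            exact ⟨hj.1, hj.2.2.2⟩
    calc ‖∑ j ∈ J, f j‖
        = ‖yy t + (∑ j ∈ (J.filter (fun j => ¬ ploc j)).filter pcl, f j
            + ∑ j ∈ ((J.filter (fun j => ¬ ploc j)).filter (fun j => ¬ pcl j)).filter pcr,
              f j)‖ := by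
          rw [hsplit1, hrest, hlocsum, add_zero, add_assoc]
      _ ≤ ‖yy t‖ + (‖∑ j ∈ (J.filter (fun j => ¬ ploc j)).filter pcl, f j‖
            + ‖∑ j ∈ ((J.filter (fun j => ¬ ploc j)).filter (fun j => ¬ pcl j)).filter pcr,
              f j‖) := le_trans (norm_add_le _ _)
                (add_le_add_right (norm_add_le _ _) _)
      _ ≤ γ t + (α t + β t) := by
          refine add_le_add (le_refl _) (add_le_add hclsum hcrsum)
      _ = α t + β t + γ t := by ring
  -- split the V-norm into the three parts
  have hsplitV : zvBlockSum F v zz k n ≤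
      ‖∑ t ∈ Finset.range k, α t • v t‖ + ‖∑ t ∈ Finset.range k, β t • v t‖
      + ‖∑ t ∈ Finset.range k, γ t • v t‖ := by
    have h1 : zvBlockSum F v zz k n ≤ ‖∑ t ∈ Finset.range k, (α t + β t + γ t) • v t‖ := by
      rw [zvBlockSum]
      refine S7.uncond_mono hv.2.1 _ _ _ (fun t _ => ?_)
      rw [abs_norm, abs_of_nonneg (add_nonneg (add_nonneg (hα0 t) (hβ0 t)) (hγ0 t))]
      exact hptw t
    have h2 : ∑ t ∈ Finset.range k, (α t + β t + γ t) • v t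
        = ∑ t ∈ Finset.range k, α t • v t + ∑ t ∈ Finset.range k, β t • v t
          + ∑ t ∈ Finset.range k, γ t • v t := by
      rw [← Finset.sum_add_distrib, ← Finset.sum_add_distrib]
      exact Finset.sum_congr rfl (fun t _ => by rw [add_smul, add_smul])
    rw [h2] at h1
    exact le_trans h1 (norm_add₃_le)
  -- the generic boundary-crossing bound
  have hbound : ∀ bpt : ℕ → ℕ, StrictMono bpt →
      ‖∑ t ∈ Finset.range k, (∑ j ∈ J.filter (fun j => mn j < bpt t ∧ bpt t ≤ mx j),
        |a j| * ‖P t j‖) • v t‖ ≤ c₁ * RHS := by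
    intro bpt hbpt
    set TL : ℕ → Finset ℕ :=
      fun j => (Finset.range k).filter (fun t => mn j < bpt t ∧ bpt t ≤ mx j) with hTL
    set w : ℕ → V := fun j => ∑ t ∈ TL j, ‖P t j‖ • v t with hw
    have hswap : ∑ t ∈ Finset.range k, (∑ j ∈ J.filter (fun j => mn j < bpt t ∧ bpt t ≤ mx j),
        |a j| * ‖P t j‖) • v t = ∑ j ∈ J, |a j| • w j := by
      have e1 : ∀ t, (∑ j ∈ J.filter (fun j => mn j < bpt t ∧ bpt t ≤ mx j),
          |a j| * ‖P t j‖) • v t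
          = ∑ j ∈ J, (if mn j < bpt t ∧ bpt t ≤ mx j
              then (|a j| * ‖P t j‖) • v t else 0) := by
        intro t
        rw [Finset.sum_smul, Finset.sum_filter]
      rw [Finset.sum_congr rfl (fun t _ => e1 t), Finset.sum_comm]
      refine Finset.sum_congr rfl (fun j _ => ?_)
      rw [← Finset.sum_filter]
      have e5 : ∀ t, (|a j| * ‖P t j‖) • v t = |a j| • (‖P t j‖ • v t) :=
        fun t => mul_smul _ _ _
      rw [Finset.sum_congr rfl (fun t _ => e5 t), ← Finset.smul_sum]
    rw [hswap]
    have hwle : ∀ j, ‖w j‖ ≤ 1 := by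
      intro j
      have e2 : w j = ∑ t ∈ Finset.range k,
          (if mn j < bpt t ∧ bpt t ≤ mx j then ‖P t j‖ else 0) • v t := by
        rw [show w j = ∑ t ∈ TL j, ‖P t j‖ • v t from rfl, Finset.sum_filter]
        exact Finset.sum_congr rfl (fun t _ => by split_ifs <;> simp)
      have h1 : ‖w j‖ ≤ ‖∑ t ∈ Finset.range k, ‖P t j‖ • v t‖ := by
        rw [e2]
        refine S7.uncond_mono hv.2.1 _ _ _ (fun t _ => ?_)
        split_ifs with hcond
        · exact le_refl _
        · rw [abs_zero]
          exact abs_nonneg _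
      have h2 : ‖∑ t ∈ Finset.range k, ‖P t j‖ • v t‖ = zvBlockSum F v (z j) k n := rfl
      rw [h2] at h1
      exact le_trans h1 (hz_zvble j k n ⟨hk1, hn0, hnsm⟩)
    have hTLord : ∀ j j', j < j' → ∀ t ∈ TL j, ∀ t' ∈ TL j', t < t' := by
      intro j j' hjj' t ht t' ht'
      rw [hTL, Finset.mem_filter] at ht ht'
      have h1 : bpt t ≤ mx j := ht.2.2
      have h2 : mn j' < bpt t' := ht'.2.1
      have h3 : mx j < mn j' := hmxmn hjj'
      exact hbpt.lt_iff_lt.mp (by omega)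
    set Wf : ℕ → ℕ →₀ ℝ := fun j => S7.fsup (TL j) (fun t => ‖P t j‖) with hWf
    have hblkW : ∀ j, S7.blk v (Wf j) = w j := by
      intro j
      rw [hWf, hw]
      exact S7.blk_fsup v (TL j) _
    set J' : Finset ℕ := J.filter (fun j => w j ≠ 0) with hJ'
    set ρ : ℕ → ℕ →₀ ℝ := fun j => (‖w j‖)⁻¹ • Wf j with hρ
    set σu : ℕ → ℕ →₀ ℝ := fun j => Finsupp.single j 1 with hσu
    set a1 : ℕ →₀ ℝ := S7.fsup J' (fun j => |a j| * ‖w j‖) with ha1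
    have hsupp1 : a1.support ⊆ J' := S7.fsup_support_subset _ _
    have hwne : ∀ j ∈ J', w j ≠ 0 := fun j hj => (Finset.mem_filter.mp hj).2
    have hρblk : ∀ j ∈ J', ‖S7.blk v (ρ j)‖ = 1 := by
      intro j hj
      show ‖S7.blk v ((‖w j‖)⁻¹ • Wf j)‖ = 1
      rw [S7.blk_smul, hblkW, norm_smul, Real.norm_eq_abs, abs_inv, abs_norm]
      exact inv_mul_cancel₀ (norm_ne_zero_iff.mpr (hwne j hj))
    have hρsupp : ∀ j, (ρ j).support ⊆ TL j :=
      fun j => subset_trans (Finsupp.support_smul) (S7.fsup_support_subset _ _)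
    have key1 := S7.unif_fin hv hu S7.Pall S7.Psing (fun i => trivial) (fun i => ⟨i, rfl⟩)
      c₁ H1 ρ σu a1 (fun j _ => trivial) (fun j _ => ⟨j, rfl⟩)
      (fun j hj => hρblk j (hsupp1 hj))
      (fun j _ => S7.blk_single_one_norm hu.1 j)
      (fun j _ j' _ hjj' i hi i' hi' =>
        hTLord j j' hjj' i (hρsupp j hi) i' (hρsupp j' hi'))
      (fun j _ j' _ hjj' i hi i' hi' => by
        rw [hσu] at hi hi'
        rw [Finsupp.support_single_ne_zero _ one_ne_zero, Finset.mem_singleton] at hi hi'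
        omega)
    have hL : S7.pairSum v ρ a1 = ∑ j ∈ J, |a j| • w j := by
      rw [S7.pairSum, ha1, S7.fsup_sum _ _ _ (by intro i _; simp)]
      have e1 : ∀ j ∈ J', (|a j| * ‖w j‖) • S7.blk v (ρ j) = |a j| • w j := by
        intro j _
        show (|a j| * ‖w j‖) • S7.blk v ((‖w j‖)⁻¹ • Wf j) = |a j| • w j
        rw [S7.blk_smul, hblkW, smul_smul, mul_assoc]
        by_cases hwz : w j = 0
        · rw [hwz, smul_zero, smul_zero]
        · rw [mul_inv_cancel₀ (norm_ne_zero_iff.mpr hwz), mul_one]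
      rw [Finset.sum_congr rfl e1]
      refine Finset.sum_subset (Finset.filter_subset _ _) ?_
      intro j hjJ hjn
      have hwz : w j = 0 := by
        by_contra hne
        exact hjn (Finset.mem_filter.mpr ⟨hjJ, hne⟩)
      rw [hwz, smul_zero]
    have hRle : ‖S7.pairSum u σu a1‖ ≤ RHS := by
      rw [S7.pairSum, ha1, S7.fsup_sum _ _ _ (by intro i _; simp)]
      have e1 : ∀ j ∈ J', (|a j| * ‖w j‖) • S7.blk u (σu j) = (|a j| * ‖w j‖) • u j := by
        intro j _
        show (|a j| * ‖w j‖) • S7.blk u (Finsupp.single j 1) = _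
        rw [S7.blk_single, one_smul]
      rw [Finset.sum_congr rfl e1]
      have hblka : RHS = ‖∑ j ∈ J, a j • u j‖ := by
        rw [hRHSblk, S7.blk_eq_sum u a (subset_refl _)]
      rw [hblka]
      have e2 : ∑ j ∈ J', (|a j| * ‖w j‖) • u j
          = ∑ j ∈ J, (if j ∈ J' then (|a j| * ‖w j‖) else 0) • u j := by
        have e3 : ∀ j, (if j ∈ J' then (|a j| * ‖w j‖) else 0) • u j
            = (if j ∈ J' then (|a j| * ‖w j‖) • u j else 0) := by
          intro j
          split_ifs <;> simp
        rw [Finset.sum_congr rfl (fun j _ => e3 j), Finset.sum_ite_mem,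
          Finset.inter_eq_right.mpr (Finset.filter_subset _ _)]
      rw [e2]
      refine S7.uncond_mono hu.2.1 J _ _ (fun j _ => ?_)
      split_ifs with hmemJ'
      · rw [abs_of_nonneg (mul_nonneg (abs_nonneg _) (norm_nonneg _))]
        calc |a j| * ‖w j‖ ≤ |a j| * 1 :=
              mul_le_mul_of_nonneg_left (hwle j) (abs_nonneg _)
          _ = |a j| := mul_one _
      · rw [abs_zero]
        exact abs_nonneg _
    calc ‖∑ j ∈ J, |a j| • w j‖ = ‖S7.pairSum v ρ a1‖ := by rw [hL]
      _ ≤ c₁ * ‖S7.pairSum u σu a1‖ := key1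
      _ ≤ c₁ * RHS := mul_le_mul_of_nonneg_left hRle (by linarith)
  have hA : ‖∑ t ∈ Finset.range k, α t • v t‖ ≤ c₁ * RHS := hbound n hnsm
  have hB : ‖∑ t ∈ Finset.range k, β t • v t‖ ≤ c₁ * RHS :=
    hbound (fun t => n (t+1)) (fun s t hst => hnsm (by omega))
  -- the local part
  have hCb : ‖∑ t ∈ Finset.range k, γ t • v t‖ ≤ C₀ * c₂ * RHS := by
    set zh : ℕ → Z := fun j => ‖z j‖⁻¹ • z j with hzh
    have hzhsupp : ∀ j, F.supp (zh j) ⊆ F.supp (z j) := fun j => S7.supp_smul_subset F _ _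
    have hzhblock : F.IsBlockSeq zh := by
      constructor
      · intro j
        constructor
        · exact smul_ne_zero (inv_ne_zero (norm_ne_zero_iff.mpr (hzne j))) (hzne j)
        · exact (hfin j).subset (hzhsupp j)
      · intro j i hi i' hi'
        exact hz.2 j i (hzhsupp j hi) i' (hzhsupp (j+1) hi')
    have hzhnorm : ∀ j, ‖zh j‖ = 1 := by
      intro j
      show ‖(‖z j‖)⁻¹ • z j‖ = 1
      rw [norm_smul, norm_inv, norm_norm, inv_mul_cancel₀ (norm_ne_zero_iff.mpr (hzne j))]
    have hdomZ := hZup zh hzhblock hzhnorm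
    set a2 : ℕ → ℕ →₀ ℝ := fun t => S7.fsup (J.filter (fun j => n t ≤ mn j ∧ mx j < n (t+1)))
      (fun j => a j * ‖z j‖) with ha2
    set g : ℕ → U := fun t => S7.blk u (a2 t) with hg
    have hyt : ∀ t, γ t ≤ C₀ * ‖g t‖ := by
      intro t
      have h1 := hdomZ (a2 t)
      have h2 : ((a2 t).sum fun j c => c • zh j) = yy t := by
        rw [ha2, S7.fsup_sum _ _ _ (by intro i _; simp), hyy]
        refine Finset.sum_congr rfl (fun j _ => ?_)
        show (a j * ‖z j‖) • ((‖z j‖)⁻¹ • z j) = a j • z j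
        rw [smul_smul, mul_assoc, mul_inv_cancel₀ (norm_ne_zero_iff.mpr (hzne j)), mul_one]
      rw [h2] at h1
      exact h1
    have hlocord : ∀ t t', t < t' →
        ∀ j ∈ J.filter (fun j => n t ≤ mn j ∧ mx j < n (t+1)),
        ∀ j' ∈ J.filter (fun j => n t' ≤ mn j ∧ mx j < n (t'+1)), j < j' := by
      intro t t' htt' j hj j' hj'
      rw [Finset.mem_filter] at hj hj'
      have h1 : mx j < n (t+1) := hj.2.2
      have h2 : n t' ≤ mn j' := hj'.2.1
      have h3 : n (t+1) ≤ n t' := hnsm.monotone (by omega)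
      by_contra hcon
      push_neg at hcon
      rcases eq_or_lt_of_le hcon with heq | hlt
      · rw [heq] at h2
        have h5 := hmnmx j
        omega
      · have h4 := hmxmn hlt
        have h5 := hmnmx j
        have h6 := hmnmx j'
        omega
    have ha2supp : ∀ t, (a2 t).support ⊆ J.filter (fun j => n t ≤ mn j ∧ mx j < n (t+1)) :=
      fun t => S7.fsup_support_subset _ _
    set T' : Finset ℕ := (Finset.range k).filter (fun t => g t ≠ 0) with hT'
    set σ2 : ℕ → ℕ →₀ ℝ := fun t => (‖g t‖)⁻¹ • a2 t with hσ2
    set ρ2 : ℕ → ℕ →₀ ℝ := fun t => Finsupp.single t 1 with hρ2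
    set a3 : ℕ →₀ ℝ := S7.fsup T' (fun t => ‖g t‖) with ha3
    have hsupp3 : a3.support ⊆ T' := S7.fsup_support_subset _ _
    have hgne : ∀ t ∈ T', g t ≠ 0 := fun t ht => (Finset.mem_filter.mp ht).2
    have hσ2blk : ∀ t ∈ T', ‖S7.blk u (σ2 t)‖ = 1 := by
      intro t ht
      show ‖S7.blk u ((‖g t‖)⁻¹ • a2 t)‖ = 1
      rw [S7.blk_smul]
      rw [show S7.blk u (a2 t) = g t from rfl]
      rw [norm_smul, Real.norm_eq_abs, abs_inv, abs_norm,
        inv_mul_cancel₀ (norm_ne_zero_iff.mpr (hgne t ht))]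
    have hσ2supp : ∀ t, (σ2 t).support ⊆ (a2 t).support := fun t => Finsupp.support_smul
    have key2 := S7.unif_fin hv hu S7.Psing S7.Pall (fun i => ⟨i, rfl⟩) (fun i => trivial)
      c₂ H2 ρ2 σ2 a3 (fun t _ => ⟨t, rfl⟩) (fun t _ => trivial)
      (fun t _ => S7.blk_single_one_norm hv.1 t)
      (fun t ht => hσ2blk t (hsupp3 ht))
      (fun t _ t' _ htt' i hi i' hi' => by
        rw [hρ2] at hi hi'
        rw [Finsupp.support_single_ne_zero _ one_ne_zero, Finset.mem_singleton] at hi hi'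
        omega)
      (fun t _ t' _ htt' i hi i' hi' =>
        hlocord t t' htt' i (ha2supp t (hσ2supp t hi)) i' (ha2supp t' (hσ2supp t' hi')))
    have hL2 : S7.pairSum v ρ2 a3 = ∑ t ∈ Finset.range k, ‖g t‖ • v t := by
      rw [S7.pairSum, ha3, S7.fsup_sum _ _ _ (by intro i _; simp)]
      have e1 : ∀ t ∈ T', ‖g t‖ • S7.blk v (ρ2 t) = ‖g t‖ • v t := by
        intro t _
        show ‖g t‖ • S7.blk v (Finsupp.single t 1) = _
        rw [S7.blk_single, one_smul]
      rw [Finset.sum_congr rfl e1]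
      refine Finset.sum_subset (Finset.filter_subset _ _) ?_
      intro t htr htn
      have hgz : g t = 0 := by
        by_contra hne
        exact htn (Finset.mem_filter.mpr ⟨htr, hne⟩)
      rw [hgz, norm_zero, zero_smul]
    have hR2 : S7.pairSum u σ2 a3 = ∑ t ∈ T', g t := by
      rw [S7.pairSum, ha3, S7.fsup_sum _ _ _ (by intro i _; simp)]
      refine Finset.sum_congr rfl (fun t ht => ?_)
      show ‖g t‖ • S7.blk u ((‖g t‖)⁻¹ • a2 t) = g t
      rw [S7.blk_smul, smul_smul, mul_inv_cancel₀ (norm_ne_zero_iff.mpr (hgne t ht)), one_smul]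
    have hfinal : ‖∑ t ∈ T', g t‖ ≤ RHS := by
      have e1 : ∑ t ∈ T', g t = S7.blk u (∑ t ∈ T', a2 t) := by
        rw [S7.blk_eq_lc, map_sum]
        exact Finset.sum_congr rfl (fun t _ => S7.blk_eq_lc u (a2 t))
      rw [e1, hRHSblk]
      refine S7.blk_mono hu.2.1 (fun i => ?_)
      rw [Finset.sum_apply']
      by_cases hex : ∃ t₀ ∈ T', (a2 t₀) i ≠ 0
      · obtain ⟨t₀, ht₀, hne⟩ := hex
        have huniq : ∀ t ∈ T', t ≠ t₀ → (a2 t) i = 0 := by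
          intro t ht htne
          by_contra hne2
          have hi1 := ha2supp t (Finsupp.mem_support_iff.mpr hne2)
          have hi2 := ha2supp t₀ (Finsupp.mem_support_iff.mpr hne)
          rcases lt_or_gt_of_ne htne with hlt | hgt
          · exact absurd (hlocord t t₀ hlt i hi1 i hi2) (lt_irrefl i)
          · exact absurd (hlocord t₀ t hgt i hi2 i hi1) (lt_irrefl i)
        rw [Finset.sum_eq_single_of_mem t₀ ht₀ (fun t ht htne => huniq t ht htne)]
        have hmem0 : i ∈ J.filter (fun j => n t₀ ≤ mn j ∧ mx j < n (t₀+1)) :=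
          ha2supp t₀ (Finsupp.mem_support_iff.mpr hne)
        have e4 : (a2 t₀) i = a i * ‖z i‖ := by
          rw [ha2]
          rw [S7.fsup_apply, if_pos hmem0]
        rw [e4, abs_mul, abs_norm]
        calc |a i| * ‖z i‖ ≤ |a i| * 1 :=
              mul_le_mul_of_nonneg_left (hzZ_le_one i) (abs_nonneg _)
          _ = |a i| := mul_one _
      · push_neg at hex
        rw [Finset.sum_eq_zero (fun t ht => hex t ht)]
        rw [abs_zero]
        exact abs_nonneg _
    have hmain : ‖∑ t ∈ Finset.range k, γ t • v t‖
        ≤ C₀ * ‖∑ t ∈ Finset.range k, ‖g t‖ • v t‖ := by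
      have e1 : ∑ t ∈ Finset.range k, (C₀ * ‖g t‖) • v t
          = C₀ • ∑ t ∈ Finset.range k, ‖g t‖ • v t := by
        rw [Finset.smul_sum]
        exact Finset.sum_congr rfl (fun t _ => by rw [mul_smul])
      have h1 : ‖∑ t ∈ Finset.range k, γ t • v t‖
          ≤ ‖∑ t ∈ Finset.range k, (C₀ * ‖g t‖) • v t‖ := by
        refine S7.uncond_mono hv.2.1 _ _ _ (fun t _ => ?_)
        rw [abs_of_nonneg (hγ0 t), abs_of_nonneg (mul_nonneg (by linarith) (norm_nonneg _))]
        exact hyt t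
      rw [e1, norm_smul, Real.norm_eq_abs, abs_of_nonneg (by linarith : (0:ℝ) ≤ C₀)] at h1
      exact h1
    calc ‖∑ t ∈ Finset.range k, γ t • v t‖
        ≤ C₀ * ‖∑ t ∈ Finset.range k, ‖g t‖ • v t‖ := hmain
      _ = C₀ * ‖S7.pairSum v ρ2 a3‖ := by rw [hL2]
      _ ≤ C₀ * (c₂ * ‖S7.pairSum u σ2 a3‖) :=
          mul_le_mul_of_nonneg_left (key2) (by linarith)
      _ = C₀ * c₂ * ‖∑ t ∈ T', g t‖ := by rw [hR2]; ring
      _ ≤ C₀ * c₂ * RHS :=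
          mul_le_mul_of_nonneg_left hfinal (mul_nonneg (by linarith) (by linarith))
  calc zvBlockSum F v zz k n
      ≤ ‖∑ t ∈ Finset.range k, α t • v t‖ + ‖∑ t ∈ Finset.range k, β t • v t‖
        + ‖∑ t ∈ Finset.range k, γ t • v t‖ := hsplitV
    _ ≤ c₁ * RHS + c₁ * RHS + C₀ * c₂ * RHS := add_le_add (add_le_add hA hB) hCb
    _ = (2 * c₁ + C₀ * c₂) * RHS := by ring
end
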